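/- arXiv:2205.13245 — 11 statements merged into one kernel-verified Lean document; each statement's English description precedes it below -/
import Mathlib

section
/- Let m ≤ n and let A_1, …, A_L be real symmetric m×m matrices. The family {A_1,…,A_L} is T_{m,n}-SDO if and only if it is SDO. -/
/-!
If `P Aᵢ Pᵀ` is diagonal for an isometry `P` (so `Pᵀ P = 1`), then `Aᵢ = Pᵀ (P Aᵢ Pᵀ) P` and the
`Aᵢ` commute because diagonal matrices do. Commuting symmetric matrices have an orthonormal basis of
joint eigenvectors, and flipping the sign of one basis vector makes the determinant `1`.
Conversely, an orthogonal diagonaliser `Q` of the `Aᵢ` gives the isometry `P = E Qᵀ`, where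
`E : ℝᵐ → ℝⁿ` is the inclusion of the first `m` coordinates.
-/

open Matrix Function

namespace Matrix

variable {ι m n R : Type*}

theorem IsDiag.commute [Fintype n] [DecidableEq n] [CommSemiring R] {A B : Matrix n n R}
    (hA : A.IsDiag) (hB : B.IsDiag) : Commute A B := by
  rw [← hA.diagonal_diag, ← hB.diagonal_diag]
  exact commute_diagonal _ _

theorem commute_of_commute_mul_mul [Fintype m] [Fintype n] [DecidableEq m] [Semiring R]
    {P : Matrix n m R} {Q : Matrix m n R} (hQP : Q * P = 1) {A B : Matrix m m R}
    (h : Commute (P * A * Q) (P * B * Q)) : Commute A B :=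
  calc A * B = Q * P * A * (Q * P) * B * (Q * P) := by simp [hQP]
    _ = Q * ((P * A * Q) * (P * B * Q)) * P := by simp only [Matrix.mul_assoc]
    _ = Q * ((P * B * Q) * (P * A * Q)) * P := by rw [h.eq]
    _ = Q * P * B * (Q * P) * A * (Q * P) := by simp only [Matrix.mul_assoc]
    _ = B * A := by simp [hQP]

theorem IsDiag.diagonal_mul_mul_diagonal [Fintype n] [DecidableEq n] [CommSemiring R]
    {A : Matrix n n R} (hA : A.IsDiag) (d e : n → R) : (diagonal d * A * diagonal e).IsDiag := by
  intro i j hij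
  simp [diagonal_mul, mul_diagonal, hA hij]

theorem transpose_one_submatrix_mul_one_submatrix [Fintype n] [DecidableEq m] [DecidableEq n]
    [NonAssocSemiring R] {e : m → n} (he : Injective e) :
    ((1 : Matrix n n R).submatrix id e)ᵀ * (1 : Matrix n n R).submatrix id e = 1 := by
  ext j k
  simp [mul_apply, one_apply, he.eq_iff]

theorem IsDiag.one_submatrix_mul_mul_transpose [Fintype m] [DecidableEq m] [DecidableEq n]
    [CommSemiring R] (e : m → n) {D : Matrix m m R} (hD : D.IsDiag) :
    ((1 : Matrix n n R).submatrix id e * D * ((1 : Matrix n n R).submatrix id e)ᵀ).IsDiag := by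
  intro a b hab
  rw [← hD.diagonal_diag, mul_apply]
  refine Finset.sum_eq_zero fun k _ => ?_
  by_cases ha : a = e k <;> by_cases hb : b = e k <;> simp [mul_diagonal, one_apply, ha, hb]
  exact (hab (ha.trans hb.symm)).elim

end Matrix

section JointEigenbasis

variable {𝕜 E : Type*} [RCLike 𝕜] [NormedAddCommGroup E] [InnerProductSpace 𝕜 E]
  [FiniteDimensional 𝕜 E]

theorem DirectSum.IsInternal.exists_orthonormalBasis_forall_exists_mem {ι ι' : Type*}
    [DecidableEq ι] [Fintype ι'] {V : ι → Submodule 𝕜 E} (hV : DirectSum.IsInternal V)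
    (hO : OrthogonalFamily 𝕜 (fun i => V i) fun i => (V i).subtypeₗᵢ)
    (hcard : Module.finrank 𝕜 E = Fintype.card ι') :
    ∃ b : OrthonormalBasis ι' 𝕜 E, ∀ a, ∃ i, b a ∈ V i := by
  -- only finitely many summands are nonzero, and dropping the others keeps the sum internal
  let _ := hV.submodule_iSupIndep.fintypeNeBotOfFiniteDimensional
  have hV' := DirectSum.isInternal_ne_bot_iff.mpr hV
  have hO' := hO.comp (Subtype.val_injective (p := fun i => V i ≠ ⊥))
  exact ⟨(hV'.subordinateOrthonormalBasis hcard hO').reindex (Fintype.equivFin ι').symm,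
    fun a => ⟨_, by
      simpa using hV'.subordinateOrthonormalBasis_subordinate hcard (Fintype.equivFin ι' a) hO'⟩⟩

theorem LinearMap.IsSymmetric.exists_orthonormalBasis_forall_apply_eq_smul {ι ι' : Type*}
    [Fintype ι'] {T : ι → E →ₗ[𝕜] E} (hT : ∀ i, (T i).IsSymmetric)
    (hC : Pairwise (Commute on T)) (hcard : Module.finrank 𝕜 E = Fintype.card ι') :
    ∃ (b : OrthonormalBasis ι' 𝕜 E) (μ : ι' → ι → 𝕜), ∀ a i, T i (b a) = μ a i • b a := by
  classical
  obtain ⟨b, hb⟩ := (directSum_isInternal_of_pairwise_commute hT hC)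
    |>.exists_orthonormalBasis_forall_exists_mem (orthogonalFamily_iInf_eigenspaces hT) hcard
  choose μ hμ using hb
  exact ⟨b, μ, fun a i => Module.End.mem_eigenspace_iff.mp (Submodule.mem_iInf _ |>.mp (hμ a) i)⟩

end JointEigenbasis

namespace Matrix

variable {ι n : Type*} [Fintype n] [DecidableEq n]

theorem exists_mem_unitaryGroup_forall_isDiag_of_commute {𝕜 : Type*} [RCLike 𝕜]
    {A : ι → Matrix n n 𝕜} (hA : ∀ i, (A i).IsHermitian) (hC : Pairwise (Commute on A)) :
    ∃ U ∈ unitaryGroup n 𝕜, ∀ i, (star U * A i * U).IsDiag := by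
  obtain ⟨b, μ, hb⟩ := LinearMap.IsSymmetric.exists_orthonormalBasis_forall_apply_eq_smul
    (T := fun i => toLpLinAlgEquiv 2 (A i)) (fun i => isSymmetric_toEuclideanLin_iff.mpr (hA i))
    (fun i j hij => (hC hij).map _) (finrank_euclideanSpace (ι := n))
  -- the columns of `U` are the joint eigenvectors `b a`
  set U := (EuclideanSpace.basisFun n 𝕜).toBasis.toMatrix b.toBasis
  have hU : U ∈ unitaryGroup n 𝕜 :=
    (EuclideanSpace.basisFun n 𝕜).toMatrix_orthonormalBasis_mem_unitary b
  have hAU : ∀ i, A i * U = U * diagonal (μ · i) := by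
    intro i
    ext k a
    have hk := congrArg (fun v : EuclideanSpace 𝕜 n => v k) (hb a i)
    simp only [toLpLinAlgEquiv_apply_apply_ofLp, PiLp.smul_apply, smul_eq_mul] at hk
    rw [mul_diagonal, mul_apply, mul_comm]
    exact hk
  refine ⟨U, hU, fun i => ?_⟩
  rw [Matrix.mul_assoc, hAU, ← Matrix.mul_assoc, mem_unitaryGroup_iff'.mp hU, Matrix.one_mul]
  exact isDiag_diagonal _

theorem exists_det_eq_one_forall_isDiag_of_transpose_mul_self {R : Type*} [CommRing R]
    [NoZeroDivisors R] {A : ι → Matrix n n R} {Q : Matrix n n R} (hQ : Qᵀ * Q = 1)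
    (hD : ∀ i, (Qᵀ * A i * Q).IsDiag) :
    ∃ P : Matrix n n R, Pᵀ * P = 1 ∧ P.det = 1 ∧ ∀ i, (Pᵀ * A i * P).IsDiag := by
  by_cases hdet : Q.det = 1
  · exact ⟨Q, hQ, hdet, hD⟩
  have hneg : Q.det = -1 := by
    refine (mul_self_eq_one_iff.mp ?_).resolve_left hdet
    simpa using congrArg det hQ
  rcases isEmpty_or_nonempty n with hn | ⟨⟨j⟩⟩
  · exact absurd det_isEmpty hdet
  -- flip the sign of the `j`-th column of `Q`
  set S := diagonal (Pi.mulSingle j (-1 : R))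
  have hSS : S * S = 1 := by
    rw [diagonal_mul_diagonal, ← diagonal_one]
    congr 1
    ext i
    by_cases h : i = j <;> simp [h]
  refine ⟨Q * S, ?_, ?_, fun i => ?_⟩
  · rw [transpose_mul, diagonal_transpose, Matrix.mul_assoc, ← Matrix.mul_assoc Qᵀ, hQ,
      Matrix.one_mul, hSS]
  · simp [S, det_diagonal, hneg]
  · rw [transpose_mul, diagonal_transpose]
    simpa only [Matrix.mul_assoc] using (hD i).diagonal_mul_mul_diagonal _ _

end Matrix

theorem stmt_0 (m n L : ℕ) (hmn : m ≤ n)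
    (A : Fin L → Matrix (Fin m) (Fin m) ℝ) (hA : ∀ i, (A i).IsSymm) :
    (∃ P : Matrix (Fin n) (Fin m) ℝ, Pᵀ * P = 1 ∧ ∀ i, (P * A i * Pᵀ).IsDiag) ↔
    (∃ P : Matrix (Fin m) (Fin m) ℝ, Pᵀ * P = 1 ∧ P.det = 1 ∧
      ∀ i, (Pᵀ * A i * P).IsDiag) := by
  constructor
  · rintro ⟨P, hP, hPD⟩
    have hC : Pairwise (Commute on A) := fun i j _ =>
      commute_of_commute_mul_mul hP ((hPD i).commute (hPD j))
    have hH : ∀ i, (A i).IsHermitian := fun i => isHermitian_iff_isSymm.mpr (hA i)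
    obtain ⟨U, hU, hUD⟩ := exists_mem_unitaryGroup_forall_isDiag_of_commute hH hC
    rw [mem_unitaryGroup_iff', star_eq_conjTranspose, conjTranspose_eq_transpose_of_trivial] at hU
    simp only [star_eq_conjTranspose, conjTranspose_eq_transpose_of_trivial] at hUD
    exact exists_det_eq_one_forall_isDiag_of_transpose_mul_self hU hUD
  · rintro ⟨Q, hQ, -, hQD⟩
    set E := (1 : Matrix (Fin n) (Fin n) ℝ).submatrix id (Fin.castLE hmn)
    refine ⟨E * Qᵀ, ?_, fun i => ?_⟩
    · rw [transpose_mul, transpose_transpose, Matrix.mul_assoc, ← Matrix.mul_assoc Eᵀ,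
        transpose_one_submatrix_mul_one_submatrix (Fin.castLE_injective hmn), Matrix.one_mul,
        mul_eq_one_comm.mp hQ]
    · simpa only [transpose_mul, transpose_transpose, Matrix.mul_assoc] using
        (hQD i).one_submatrix_mul_mul_transpose (Fin.castLE hmn)
end

section
/- Let A and B be real symmetric m×m matrices such that the pair {A, B} is singular, i.e., det(αA + βB) = 0 for all real numbers α, β. Then the pair {A, B} is TWSD-B. -/
/-!
A singular pencil has a nonzero polynomial kernel vector `p(λ) = ∑ⱼ vⱼ λʲ`, i.e.
`A v₀ = 0` and `A vⱼ₊₁ + B vⱼ = 0`. Shifting indices with these relations and the symmetry of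
`A` and `B` gives `⟪vⱼ, A vₖ⟫ = ⟪vⱼ₊₁, A vₖ₋₁⟫ = … = 0`, so `V = span {vⱼ}` is orthogonal to
`U = A V`, and `B V ⊆ U`. Moreover `dim U < dim V`, because `A` kills the first nonzero `vⱼ`.

In a basis adapted to `V ⊕ U ⊕ (V + U)ᗮ`, the only blocks of `A` and `B` that can be nonzero are
those pairing `U` with something, or `(V + U)ᗮ` with itself. Rescaling the three blocks by
`tᵃ, t⁻ᵇ, t⁻ᶜ` with `a, b, c > 0`, `a < b` and total exponent `0` (possible as `dim V > dim U`)
gives congruences of determinant one under which both matrices tend to `0` as `t → ∞`.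
-/

open Matrix Filter Topology

def TWSDB {ι : Type*} {m : ℕ} (A : ι → Matrix (Fin m) (Fin m) ℝ) : Prop :=
  ∃ P : ℕ → Matrix (Fin m) (Fin m) ℝ,
    (∀ k, (P k).det = 1) ∧
    ∃ D : ι → Matrix (Fin m) (Fin m) ℝ, (∀ i, (D i).IsDiag) ∧
      ∀ i, Tendsto (fun k => (P k)ᵀ * A i * P k) atTop (𝓝 (D i))

open Module RealInnerProductSpace

theorem Matrix.mul_diagonal_transpose_mul_mul_diagonal_apply {n R : Type*} [Fintype n]
    [DecidableEq n] [CommSemiring R] (Q M : Matrix n n R) (c : n → R) (i j : n) :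
    ((Q * diagonal c)ᵀ * M * (Q * diagonal c)) i j = c i * (Qᵀ * M * Q) i j * c j := by
  have : (Q * diagonal c)ᵀ * M * (Q * diagonal c) = diagonal c * (Qᵀ * M * Q) * diagonal c := by
    simp only [transpose_mul, diagonal_transpose, Matrix.mul_assoc]
  rw [this, mul_diagonal, diagonal_mul]

theorem Matrix.exists_det_mul_diagonal_eq_one {n K : Type*} [Fintype n] [DecidableEq n] [Field K]
    (Q : Matrix n n K) (hQ : Q.det ≠ 0) : ∃ c : n → K, (Q * diagonal c).det = 1 := by
  rcases isEmpty_or_nonempty n with hn | ⟨⟨i⟩⟩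
  · exact ⟨0, det_isEmpty⟩
  · refine ⟨Function.update 1 i Q.det⁻¹, ?_⟩
    rw [det_mul, det_diagonal, Finset.prod_update_of_mem (Finset.mem_univ i)]
    simp [hQ]

theorem Matrix.IsSymm.isSymmetric_toEuclideanLin {n : Type*} [Fintype n] [DecidableEq n]
    {M : Matrix n n ℝ} (hM : M.IsSymm) : (toEuclideanLin M).IsSymmetric :=
  isSymmetric_toEuclideanLin_iff.2 (isHermitian_iff_isSymm.2 hM)

theorem twsdb_of_weights_of_det_eq_one {ι : Type*} {m : ℕ} (A : ι → Matrix (Fin m) (Fin m) ℝ)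
    (Q : Matrix (Fin m) (Fin m) ℝ) (hQ : Q.det = 1) (e : Fin m → ℝ) (he : ∑ i, e i = 0)
    (hA : ∀ k i j, 0 ≤ e i + e j → (Qᵀ * A k * Q) i j = 0) : TWSDB A := by
  refine ⟨fun t => Q * diagonal fun i => Real.exp (t * e i), fun t => ?_, 0,
    fun _ => isDiag_zero, fun k => tendsto_pi_nhds.2 fun i => tendsto_pi_nhds.2 fun j => ?_⟩
  · rw [det_mul, hQ, det_diagonal, ← Real.exp_sum, ← Finset.mul_sum, he, mul_zero,
      Real.exp_zero, one_mul]
  simp only [mul_diagonal_transpose_mul_mul_diagonal_apply, Pi.zero_apply]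
  rcases le_or_gt 0 (e i + e j) with hij | hij
  · simp [hA k i j hij]
  · have h : Tendsto (fun t : ℕ => Real.exp (t * (e i + e j))) atTop (𝓝 0) :=
      Real.tendsto_exp_atBot.comp (tendsto_natCast_atTop_atTop.atTop_mul_const_of_neg hij)
    convert h.const_mul ((Qᵀ * A k * Q) i j) using 2 with t
    · rw [mul_add, Real.exp_add]
      ring
    · simp

theorem twsdb_of_weights {ι : Type*} {m : ℕ} (A : ι → Matrix (Fin m) (Fin m) ℝ)
    (Q : Matrix (Fin m) (Fin m) ℝ) (hQ : Q.det ≠ 0) (e : Fin m → ℝ) (he : ∑ i, e i = 0)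
    (hA : ∀ k i j, 0 ≤ e i + e j → (Qᵀ * A k * Q) i j = 0) : TWSDB A := by
  obtain ⟨c, hc⟩ := Q.exists_det_mul_diagonal_eq_one hQ
  refine twsdb_of_weights_of_det_eq_one A _ hc e he fun k i j hij => ?_
  rw [mul_diagonal_transpose_mul_mul_diagonal_apply, hA k i j hij, mul_zero, zero_mul]

theorem twsdb_of_basis {ι κ : Type*} [Fintype κ] {m : ℕ} (A : ι → Matrix (Fin m) (Fin m) ℝ)
    (b : Basis κ ℝ (EuclideanSpace ℝ (Fin m))) (e : κ → ℝ) (he : ∑ i, e i = 0)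
    (hA : ∀ k i j, 0 ≤ e i + e j → ⟪b i, toEuclideanLin (A k) (b j)⟫ = 0) : TWSDB A := by
  let σ := b.indexEquiv (EuclideanSpace.basisFun (Fin m) ℝ).toBasis
  let Q := (EuclideanSpace.basisFun (Fin m) ℝ).toBasis.toMatrix (b.reindex σ)
  refine twsdb_of_weights A Q ?_ (e ∘ σ.symm) (he ▸ σ.symm.sum_comp e) fun k i j hij => ?_
  · rw [← Basis.det_apply]
    exact (Basis.isUnit_det _ _).ne_zero
  · have hcol l : Qᵀ l = b (σ.symm l) := by
      ext
      simp [Q, Basis.toMatrix_apply]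
    rw [mul_mul_apply, hcol, hcol, dotProduct_comm, ← hA k _ _ hij,
      EuclideanSpace.inner_eq_star_dotProduct]
    simp

theorem twsdb_of_isInternal {ι κ : Type*} [Fintype κ] [DecidableEq κ] {m : ℕ}
    (A : ι → Matrix (Fin m) (Fin m) ℝ) (S : κ → Submodule ℝ (EuclideanSpace ℝ (Fin m)))
    (hS : DirectSum.IsInternal S) (a : κ → ℝ) (ha : ∑ i, finrank ℝ (S i) * a i = 0)
    (hA : ∀ k i j, 0 ≤ a i + a j → ∀ x ∈ S i, ∀ y ∈ S j, ⟪x, toEuclideanLin (A k) y⟫ = 0) :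
    TWSDB A := by
  refine twsdb_of_basis A (hS.collectedBasis fun i => finBasis ℝ (S i)) (fun p => a p.1) ?_
    fun k p q hpq => hA k p.1 q.1 hpq _ (hS.collectedBasis_mem _ p) _ (hS.collectedBasis_mem _ q)
  simpa [Fintype.sum_sigma] using ha

theorem isInternal_orthogonal_sup {𝕜 E : Type*} [RCLike 𝕜] [NormedAddCommGroup E]
    [InnerProductSpace 𝕜 E] [FiniteDimensional 𝕜 E] {V U : Submodule 𝕜 E} (hVU : V ⟂ U) :
    DirectSum.IsInternal ![V, U, (V ⊔ U)ᗮ] := by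
  have hsup := (V ⊔ U).isOrtho_orthogonal_right
  refine (OrthogonalFamily.of_pairwise fun i j hij => ?_).isInternal_iff.2 ?_
  · fin_cases i <;> fin_cases j
    exacts [(hij rfl).elim, hVU, hsup.mono_left le_sup_left, hVU.symm, (hij rfl).elim,
      hsup.mono_left le_sup_right, (hsup.mono_left le_sup_left).symm,
      (hsup.mono_left le_sup_right).symm, (hij rfl).elim]
  · rw [Submodule.orthogonal_eq_bot_iff, eq_top_iff,
      ← (V ⊔ U).sup_orthogonal_of_hasOrthogonalProjection]
    exact sup_le (sup_le (le_iSup ![V, U, (V ⊔ U)ᗮ] 0) (le_iSup ![V, U, (V ⊔ U)ᗮ] 1))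
      (le_iSup ![V, U, (V ⊔ U)ᗮ] 2)

theorem twsdb_of_isOrtho_map_le {ι : Type*} {m : ℕ} (A : ι → Matrix (Fin m) (Fin m) ℝ)
    (hA : ∀ k, (A k).IsSymm) (V U : Submodule ℝ (EuclideanSpace ℝ (Fin m))) (hVU : V ⟂ U)
    (hmap : ∀ k, V.map (toEuclideanLin (A k)) ≤ U) (hdim : finrank ℝ U < finrank ℝ V) :
    TWSDB A := by
  have hmem k {x} (hx : x ∈ V) : toEuclideanLin (A k) x ∈ U := hmap k ⟨x, hx, rfl⟩
  have hd : (finrank ℝ U : ℝ) + 1 ≤ finrank ℝ V := by exact_mod_cast hdim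
  set d : ℝ := (finrank ℝ V : ℝ)
  set d' : ℝ := (finrank ℝ U : ℝ)
  set w : ℝ := (finrank ℝ (V ⊔ U)ᗮ : ℝ)
  have hd' : 0 ≤ d' := Nat.cast_nonneg _
  have hw : 0 ≤ w := Nat.cast_nonneg _
  -- The only pairs of blocks with nonnegative total weight are `V × V`, `V × (V ⊔ U)ᗮ` and its
  -- transpose, and there `A k` vanishes.
  refine twsdb_of_isInternal A _ (isInternal_orthogonal_sup hVU)
    ![d' * (w + 1) + w, -(d * (w + 1)), -d] ?_ fun k i j hij x hx y hy => ?_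
  · simp only [Fin.sum_univ_three]
    change d * _ + d' * _ + w * _ = 0
    simp only [cons_val_zero, cons_val_one, cons_val]
    ring
  · fin_cases i <;> fin_cases j <;>
      simp only [Fin.zero_eta, Fin.mk_one, Fin.reduceFinMk, cons_val_zero, cons_val_one, cons_val]
        at hij hx hy
    · exact hVU.inner_eq hx (hmem k hy)
    · nlinarith
    · rw [← (hA k).isSymmetric_toEuclideanLin]
      exact Submodule.inner_right_of_mem_orthogonal (Submodule.mem_sup_right (hmem k hx)) hy
    · nlinarith
    · nlinarith
    · nlinarith
    · exact Submodule.inner_left_of_mem_orthogonal (Submodule.mem_sup_right (hmem k hy)) hx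
    · nlinarith
    · linarith

open Polynomial in
theorem exists_chain_of_det_add_smul_eq_zero {n K : Type*} [Fintype n] [DecidableEq n] [Field K]
    [Infinite K] (A B : Matrix n n K) (h : ∀ β : K, (A + β • B).det = 0) :
    ∃ v : ℕ → n → K, (∃ j, v j ≠ 0) ∧ A *ᵥ v 0 = 0 ∧ ∀ j, A *ᵥ v (j + 1) + B *ᵥ v j = 0 := by
  set M : Matrix n n K[X] := A.map C + (X : K[X]) • B.map C
  have hM : M.det = 0 := Polynomial.funext fun β => by
    rw [← coe_evalRingHom, RingHom.map_det, map_zero, ← h β]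
    congr 1
    ext i j
    simpa [M] using mul_comm _ _
  obtain ⟨p, hp, hMp⟩ := exists_mulVec_eq_zero_iff.2 hM
  have hcoeff (i : n) (j : ℕ) : ((M *ᵥ p) i).coeff j = 0 := by rw [hMp]; rfl
  refine ⟨fun j l => (p l).coeff j, ?_, funext fun i => ?_, fun j => funext fun i => ?_⟩
  · obtain ⟨l, hl⟩ := Function.ne_iff.1 hp
    exact ⟨(p l).natDegree, Function.ne_iff.2 ⟨l, leadingCoeff_ne_zero.2 hl⟩⟩
  · simpa [M, mulVec, dotProduct, add_mul, coeff_C_mul, mul_assoc] using hcoeff i 0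
  · simpa [M, mulVec, dotProduct, add_mul, coeff_C_mul, mul_assoc, coeff_X_mul,
      Finset.sum_add_distrib] using hcoeff i (j + 1)

theorem Submodule.finrank_map_lt {K M N : Type*} [DivisionRing K] [AddCommGroup M] [Module K M]
    [AddCommGroup N] [Module K N] [FiniteDimensional K M] (V : Submodule K M) (f : M →ₗ[K] N)
    {x : M} (hxV : x ∈ V) (hx : x ≠ 0) (hfx : f x = 0) : finrank K (V.map f) < finrank K V := by
  have hker : 0 < finrank K (LinearMap.ker (f.domRestrict V)) :=
    finrank_pos_iff_exists_ne_zero.2 ⟨⟨⟨x, hxV⟩, hfx⟩, by simpa [Subtype.ext_iff] using hx⟩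
  have := (f.domRestrict V).finrank_range_add_finrank_ker
  rw [LinearMap.range_domRestrict] at this
  omega

section Chain

variable {R M : Type*} [Ring R] [AddCommGroup M] [Module R M] {S T : M →ₗ[R] M} {v : ℕ → M}

theorem map_span_range_le_map_span_range (hv : ∀ j, T (v (j + 1)) + S (v j) = 0) :
    (Submodule.span R (Set.range v)).map S ≤ (Submodule.span R (Set.range v)).map T := by
  rw [Submodule.map_span, Submodule.map_span, Submodule.span_le]
  rintro _ ⟨_, ⟨j, rfl⟩, rfl⟩
  rw [eq_neg_of_add_eq_zero_right (hv j)]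
  exact neg_mem (Submodule.subset_span ⟨v (j + 1), ⟨j + 1, rfl⟩, rfl⟩)

theorem exists_ne_zero_apply_eq_zero (hv₀ : T (v 0) = 0) (hv : ∀ j, T (v (j + 1)) + S (v j) = 0)
    (hne : ∃ j, v j ≠ 0) : ∃ j, v j ≠ 0 ∧ T (v j) = 0 := by
  classical
  refine ⟨Nat.find hne, Nat.find_spec hne, ?_⟩
  rcases hfind : Nat.find hne with _ | j
  · exact hv₀
  · have hj : v j = 0 := not_not.1 (Nat.find_min hne (by omega))
    rw [eq_neg_of_add_eq_zero_left (hv j), hj, map_zero, neg_zero]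

end Chain

section Isotropic

variable {𝕜 E : Type*} [RCLike 𝕜] [NormedAddCommGroup E] [InnerProductSpace 𝕜 E]
  {S T : E →ₗ[𝕜] E} {v : ℕ → E}

open scoped InnerProductSpace

theorem inner_apply_chain_eq_zero (hS : S.IsSymmetric) (hT : T.IsSymmetric) (hv₀ : T (v 0) = 0)
    (hv : ∀ j, T (v (j + 1)) + S (v j) = 0) (j k : ℕ) : ⟪v j, T (v k)⟫_𝕜 = 0 := by
  induction k generalizing j with
  | zero => rw [hv₀, inner_zero_right]
  | succ k ih =>
    calc ⟪v j, T (v (k + 1))⟫_𝕜 = -⟪S (v j), v k⟫_𝕜 := by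
          rw [eq_neg_of_add_eq_zero_left (hv k), inner_neg_right, hS]
      _ = ⟪v (j + 1), T (v k)⟫_𝕜 := by
          rw [eq_neg_of_add_eq_zero_right (hv j), inner_neg_left, neg_neg, hT]
      _ = 0 := ih (j + 1)

theorem span_range_isOrtho_map (hS : S.IsSymmetric) (hT : T.IsSymmetric) (hv₀ : T (v 0) = 0)
    (hv : ∀ j, T (v (j + 1)) + S (v j) = 0) :
    Submodule.span 𝕜 (Set.range v) ⟂ (Submodule.span 𝕜 (Set.range v)).map T := by
  rw [Submodule.map_span, Submodule.isOrtho_span]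
  rintro _ ⟨j, rfl⟩ _ ⟨_, ⟨k, rfl⟩, rfl⟩
  exact inner_apply_chain_eq_zero hS hT hv₀ hv j k

end Isotropic

theorem stmt_3 (m : ℕ) (A B : Matrix (Fin m) (Fin m) ℝ)
    (hA : A.IsSymm) (hB : B.IsSymm)
    (hsing : ∀ α β : ℝ, (α • A + β • B).det = 0) :
    TWSDB ![A, B] := by
  obtain ⟨v, hne, hv₀, hv⟩ :=
    exists_chain_of_det_add_smul_eq_zero A B fun β => by simpa using hsing 1 β
  let w j : EuclideanSpace ℝ (Fin m) := WithLp.toLp 2 (v j)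
  let V := Submodule.span ℝ (Set.range w)
  have hw₀ : toEuclideanLin A (w 0) = 0 := by simp [w, hv₀]
  have hw j : toEuclideanLin A (w (j + 1)) + toEuclideanLin B (w j) = 0 := by
    simp [w, ← WithLp.toLp_add, hv j]
  obtain ⟨j, hj, hAj⟩ := exists_ne_zero_apply_eq_zero hw₀ hw (by simpa [w] using hne)
  exact twsdb_of_isOrtho_map_le ![A, B] (Fin.forall_fin_two.2 ⟨hA, hB⟩) V
    (V.map (toEuclideanLin A))
    (span_range_isOrtho_map hB.isSymmetric_toEuclideanLin hA.isSymmetric_toEuclideanLin hw₀ hw)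
    (Fin.forall_fin_two.2 ⟨le_rfl, map_span_range_le_map_span_range hw⟩)
    (V.finrank_map_lt _ (Submodule.subset_span ⟨j, rfl⟩) hj hAj)
end

section
/- Let A_1, …, A_L be real symmetric m×m matrices and suppose there exist real numbers α_1, …, α_L such that α_1 A_1 + ⋯ + α_L A_L is positive definite. Then the family {A_1,…,A_L} is TWSD-B if and only if it is SD. -/
open Matrix Filter Topology

/-- Simultaneously diagonalizable on `SL_m(ℝ)`. -/
def IsSD {ι : Type*} {m : ℕ} (A : ι → Matrix (Fin m) (Fin m) ℝ) : Prop :=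
  ∃ P : Matrix (Fin m) (Fin m) ℝ, P.det = 1 ∧ ∀ i, (Pᵀ * A i * P).IsDiag

/-!
Write the positive definite combination as `S = Bᵀ * B` with `B` invertible. If
`(P k)ᵀ * A i * P k → D i`, then `(B * P k)ᵀ * (B * P k) = (P k)ᵀ * S * P k` converges, so its
diagonal bounds the entries of `B * P k`, and hence `P k` has a convergent subsequence with limit
`Q`. By continuity `det Q = 1` and `Qᵀ * A i * Q = D i`.
-/

namespace Matrix

variable {n : Type*} [Fintype n]

theorem sq_apply_le_transpose_mul_self_apply (X : Matrix n n ℝ) (i j : n) :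
    X i j ^ 2 ≤ (Xᵀ * X) j j := by
  rw [mul_apply, sq]
  exact Finset.single_le_sum (f := fun l => Xᵀ j l * X l j) (fun l _ => mul_self_nonneg (X l j))
    (Finset.mem_univ i)

theorem exists_tendsto_subseq_of_tendsto_transpose_mul_self {X : ℕ → Matrix n n ℝ}
    {M : Matrix n n ℝ} (h : Tendsto (fun k => (X k)ᵀ * X k) atTop (𝓝 M)) :
    ∃ Q : Matrix n n ℝ, ∃ φ : ℕ → ℕ, StrictMono φ ∧ Tendsto (X ∘ φ) atTop (𝓝 Q) := by
  have hdiag (j : n) : BddAbove (Set.range fun k => ((X k)ᵀ * X k) j j) :=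
    ((continuous_apply_apply j j).tendsto M |>.comp h).bddAbove_range
  choose c hc using hdiag
  let K : Set (Matrix n n ℝ) :=
    Set.univ.pi fun _ => Set.univ.pi fun j => Set.Icc (-√(c j)) √(c j)
  have hK : IsCompact K := isCompact_univ_pi fun _ => isCompact_univ_pi fun _ => isCompact_Icc
  have hXK (k : ℕ) : X k ∈ K := fun i _ j _ =>
    abs_le.mp <| Real.abs_le_sqrt <|
      (sq_apply_le_transpose_mul_self_apply (X k) i j).trans (hc j ⟨k, rfl⟩)
  -- `Matrix` is a type synonym, so the instance for `n → n → ℝ` is not found on its own.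
  have : FirstCountableTopology (Matrix n n ℝ) :=
    inferInstanceAs (FirstCountableTopology (n → n → ℝ))
  obtain ⟨Q, -, φ, hφ, hQ⟩ := hK.tendsto_subseq hXK
  exact ⟨Q, φ, hφ, hQ⟩

open scoped MatrixOrder in
theorem PosDef.exists_isUnit_eq_transpose_mul [DecidableEq n] {S : Matrix n n ℝ}
    (hS : S.PosDef) : ∃ B : Matrix n n ℝ, IsUnit B ∧ S = Bᵀ * B := by
  obtain ⟨B, hB, rfl⟩ :=
    CStarAlgebra.isStrictlyPositive_iff_eq_star_mul_self.mp hS.isStrictlyPositive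
  exact ⟨B, hB, by simp [star_eq_conjTranspose]⟩

theorem PosDef.exists_tendsto_subseq_of_tendsto_congr [DecidableEq n] {S : Matrix n n ℝ}
    (hS : S.PosDef) {P : ℕ → Matrix n n ℝ} {M : Matrix n n ℝ}
    (h : Tendsto (fun k => (P k)ᵀ * S * P k) atTop (𝓝 M)) :
    ∃ Q : Matrix n n ℝ, ∃ φ : ℕ → ℕ, StrictMono φ ∧ Tendsto (P ∘ φ) atTop (𝓝 Q) := by
  obtain ⟨B, hB, rfl⟩ := hS.exists_isUnit_eq_transpose_mul
  have hBP : Tendsto (fun k => (B * P k)ᵀ * (B * P k)) atTop (𝓝 M) := by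
    simpa only [transpose_mul, Matrix.mul_assoc] using h
  obtain ⟨Q, φ, hφ, hQ⟩ := exists_tendsto_subseq_of_tendsto_transpose_mul_self hBP
  refine ⟨B⁻¹ * Q, φ, hφ, ?_⟩
  have hP (k : ℕ) : P k = B⁻¹ * (B * P k) := by
    rw [← Matrix.mul_assoc, nonsing_inv_mul B ((isUnit_iff_isUnit_det B).mp hB), Matrix.one_mul]
  rw [funext hP]
  exact ((continuous_const.matrix_mul continuous_id).tendsto Q).comp hQ

end Matrix

theorem IsSD.twsdb {ι : Type*} {m : ℕ} {A : ι → Matrix (Fin m) (Fin m) ℝ} (h : IsSD A) :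
    TWSDB A :=
  let ⟨P, hdet, hdiag⟩ := h
  ⟨fun _ => P, fun _ => hdet, fun i => Pᵀ * A i * P, hdiag, fun _ => tendsto_const_nhds⟩

theorem TWSDB.isSD_of_posDef {ι : Type*} [Fintype ι] {m : ℕ} {A : ι → Matrix (Fin m) (Fin m) ℝ}
    (h : TWSDB A) {α : ι → ℝ} (hpd : (∑ i, α i • A i).PosDef) : IsSD A := by
  obtain ⟨P, hdet, D, hD, hPD⟩ := h
  have hsum : Tendsto (fun k => (P k)ᵀ * (∑ i, α i • A i) * P k) atTop (𝓝 (∑ i, α i • D i)) := by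
    simpa only [Finset.mul_sum, Finset.sum_mul, Matrix.mul_smul, Matrix.smul_mul] using
      tendsto_finsetSum _ fun i _ => (hPD i).const_smul (α i)
  obtain ⟨Q, φ, hφ, hQ⟩ := hpd.exists_tendsto_subseq_of_tendsto_congr hsum
  refine ⟨Q, ?_, fun i => ?_⟩
  · refine tendsto_nhds_unique ((continuous_id.matrix_det.tendsto Q).comp hQ) ?_
    simp only [Function.comp_def, id, hdet, tendsto_const_nhds]
  · have hcongr : Continuous fun M : Matrix (Fin m) (Fin m) ℝ => Mᵀ * A i * M :=
      (continuous_id.matrix_transpose.matrix_mul continuous_const).matrix_mul continuous_id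
    rw [tendsto_nhds_unique ((hcongr.tendsto Q).comp hQ) ((hPD i).comp hφ.tendsto_atTop)]
    exact hD i

theorem stmt_4_general (m L : ℕ) (A : Fin L → Matrix (Fin m) (Fin m) ℝ)
    (hpd : ∃ α : Fin L → ℝ, (∑ i, α i • A i).PosDef) :
    TWSDB A ↔ IsSD A := by
  obtain ⟨α, hα⟩ := hpd
  exact ⟨fun h => h.isSD_of_posDef hα, IsSD.twsdb⟩

theorem stmt_4 (m L : ℕ) (A : Fin L → Matrix (Fin m) (Fin m) ℝ)
    (hA : ∀ i, (A i).IsSymm)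
    (hpd : ∃ α : Fin L → ℝ, (∑ i, α i • A i).PosDef) :
    TWSDB A ↔ IsSD A :=
  stmt_4_general m L A hpd
end

section
/- Let A_1, …, A_L be real symmetric m×m matrices and let S = α_1 A_1 + ⋯ + α_L A_L be an invertible real linear combination of them. If the family {A_1,…,A_L} is TWSD-B, then for every 1 ≤ i ≤ L every complex eigenvalue of S⁻¹A_i is real, and for all 1 ≤ i ≠ j ≤ L the S-commutator [A_i, A_j]_S = S⁻¹A_i S⁻¹A_j − S⁻¹A_j S⁻¹A_i is nilpotent. -/
/-!
Along the TWSD-B sequence, `Pₖᵀ S Pₖ` converges to a diagonal matrix whose determinant is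
`det S ≠ 0`, so `(Pₖᵀ S Pₖ)⁻¹ (Pₖᵀ Aᵢ Pₖ) = Pₖ⁻¹ (S⁻¹ Aᵢ) Pₖ` converges to a diagonal matrix.
The characteristic polynomial is constant on similarity classes and continuous, so `S⁻¹ Aᵢ` has
the characteristic polynomial of a real diagonal matrix, and the `S`-commutator, whose
conjugates converge to the commutator of two diagonal matrices, has that of `0`.
-/

open Matrix Filter Topology

def HasOnlyRealEigenvalues {m : ℕ} (M : Matrix (Fin m) (Fin m) ℝ) : Prop :=
  ∀ z : ℂ, (M.charpoly.map (algebraMap ℝ ℂ)).IsRoot z → z.im = 0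

open Polynomial

namespace Matrix

variable {n K ι : Type*} [Fintype n] [DecidableEq n]

section CommRing

variable [CommRing K] {P : Matrix n n K}

theorem inv_congr_mul_congr (hP : IsUnit P.det) (S A : Matrix n n K) :
    (Pᵀ * S * P)⁻¹ * (Pᵀ * A * P) = P⁻¹ * (S⁻¹ * A) * P := by
  have hPt : IsUnit Pᵀ.det := by rwa [det_transpose]
  simp only [mul_inv_rev, Matrix.mul_assoc, nonsing_inv_mul_cancel_left _ _ hPt]

theorem conj_mul_conj (hP : IsUnit P.det) (X Y : Matrix n n K) :
    P⁻¹ * X * P * (P⁻¹ * Y * P) = P⁻¹ * (X * Y) * P := by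
  simp only [Matrix.mul_assoc, mul_nonsing_inv_cancel_left _ _ hP]

theorem charpoly_conj (hP : IsUnit P.det) (M : Matrix n n K) :
    (P⁻¹ * M * P).charpoly = M.charpoly := by
  rw [charpoly_mul_comm, ← Matrix.mul_assoc, mul_nonsing_inv _ hP, Matrix.one_mul]

variable [TopologicalSpace K] [IsTopologicalRing K] {l : Filter ι} [l.NeBot]

theorem charpoly_eq_of_tendsto_conj [IsDomain K] [Infinite K] [T2Space K]
    {Q : ι → Matrix n n K} (hQ : ∀ k, IsUnit (Q k).det) {M N : Matrix n n K}
    (h : Tendsto (fun k => (Q k)⁻¹ * M * Q k) l (𝓝 N)) : M.charpoly = N.charpoly := by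
  refine Polynomial.funext fun t => ?_
  have hlim : Tendsto (fun k => ((Q k)⁻¹ * M * Q k).charpoly.eval t) l
      (𝓝 (N.charpoly.eval t)) := by
    simp only [eval_charpoly]
    exact ((continuous_const.sub continuous_id).matrix_det.tendsto N).comp h
  simp only [charpoly_conj (hQ _)] at hlim
  exact tendsto_nhds_unique tendsto_const_nhds hlim

theorem isNilpotent_of_tendsto_conj_zero [IsDomain K] [Infinite K] [T2Space K]
    {Q : ι → Matrix n n K} (hQ : ∀ k, IsUnit (Q k).det) {M : Matrix n n K}
    (h : Tendsto (fun k => (Q k)⁻¹ * M * Q k) l (𝓝 0)) : IsNilpotent M := by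
  refine ⟨Fintype.card n, ?_⟩
  simpa [charpoly_eq_of_tendsto_conj hQ h] using aeval_self_charpoly M

theorem det_eq_of_tendsto_congr [T2Space K] {P : ι → Matrix n n K} (hP : ∀ k, (P k).det = 1)
    {S D : Matrix n n K} (h : Tendsto (fun k => (P k)ᵀ * S * P k) l (𝓝 D)) : D.det = S.det := by
  have hdet := (continuous_id.matrix_det.tendsto D).comp h
  simp only [Function.comp_def, id, det_mul, det_transpose, hP, one_mul, mul_one] at hdet
  exact tendsto_nhds_unique hdet tendsto_const_nhds

end CommRing

theorem tendsto_conj_inv_mul [Field K] [TopologicalSpace K] [IsTopologicalDivisionRing K]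
    {l : Filter ι} {P : ι → Matrix n n K} (hP : ∀ k, IsUnit (P k).det)
    {S A D₀ D : Matrix n n K} (hD₀ : D₀.det ≠ 0)
    (hS : Tendsto (fun k => (P k)ᵀ * S * P k) l (𝓝 D₀))
    (hA : Tendsto (fun k => (P k)ᵀ * A * P k) l (𝓝 D)) :
    Tendsto (fun k => (P k)⁻¹ * (S⁻¹ * A) * P k) l (𝓝 (D₀⁻¹ * D)) := by
  have hinv : ContinuousAt Inv.inv D₀ :=
    continuousAt_matrix_inv D₀ (by rw [Ring.inverse_eq_inv']; exact continuousAt_inv₀ hD₀)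
  simpa only [Function.comp_def, inv_congr_mul_congr (hP _)] using (hinv.tendsto.comp hS).mul hA

end Matrix

theorem hasOnlyRealEigenvalues_diagonal {m : ℕ} (d : Fin m → ℝ) :
    HasOnlyRealEigenvalues (diagonal d) := by
  intro z hz
  simp only [charpoly_diagonal, Polynomial.map_prod, Polynomial.map_sub, map_X, map_C,
    IsRoot, eval_prod, eval_sub, eval_X, eval_C, Finset.prod_eq_zero_iff, sub_eq_zero] at hz
  obtain ⟨l, -, rfl⟩ := hz
  simp

theorem HasOnlyRealEigenvalues.of_tendsto_conj {ι : Type*} {l : Filter ι} [l.NeBot] {m : ℕ}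
    {Q : ι → Matrix (Fin m) (Fin m) ℝ} (hQ : ∀ k, IsUnit (Q k).det) {M N : Matrix (Fin m) (Fin m) ℝ}
    (h : Tendsto (fun k => (Q k)⁻¹ * M * Q k) l (𝓝 N)) (hN : HasOnlyRealEigenvalues N) :
    HasOnlyRealEigenvalues M := by
  unfold HasOnlyRealEigenvalues
  rwa [charpoly_eq_of_tendsto_conj hQ h]

theorem TWSDB.exists_tendsto_conj_diagonal {ι : Type*} [Fintype ι] {m : ℕ}
    {A : ι → Matrix (Fin m) (Fin m) ℝ} (h : TWSDB A) (α : ι → ℝ)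
    (hdet : IsUnit (∑ j, α j • A j).det) :
    ∃ P : ℕ → Matrix (Fin m) (Fin m) ℝ, (∀ k, IsUnit (P k).det) ∧
      ∃ e : ι → Fin m → ℝ, ∀ i, Tendsto (fun k => (P k)⁻¹ * ((∑ j, α j • A j)⁻¹ * A i) * P k)
        atTop (𝓝 (diagonal (e i))) := by
  obtain ⟨P, hP, D, hD, hlim⟩ := h
  have hPunit : ∀ k, IsUnit (P k).det := fun k => by simp [hP k]
  set s : Fin m → ℝ := ∑ j, α j • (D j).diag
  have hsum : Tendsto (fun k => (P k)ᵀ * (∑ j, α j • A j) * P k) atTop (𝓝 (diagonal s)) := by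
    have hD' : diagonal s = ∑ j, α j • D j := by
      rw [← diagonalAddMonoidHom_apply, map_sum]
      refine Finset.sum_congr rfl fun j _ => ?_
      rw [diagonalAddMonoidHom_apply, diagonal_smul, (hD j).diagonal_diag]
    simp only [hD', Finset.mul_sum, Finset.sum_mul, Matrix.mul_smul, Matrix.smul_mul]
    exact tendsto_finsetSum _ fun j _ => (hlim j).const_smul (α j)
  have hs : (diagonal s).det ≠ 0 := by
    rw [det_eq_of_tendsto_congr hP hsum]; exact hdet.ne_zero
  refine ⟨P, hPunit, fun i => Ring.inverse s * (D i).diag, fun i => ?_⟩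
  have he : diagonal (Ring.inverse s * (D i).diag) = (diagonal s)⁻¹ * D i := by
    rw [inv_diagonal, ← (hD i).diagonal_diag, diagonal_mul_diagonal, diag_diagonal]; rfl
  rw [he]
  exact tendsto_conj_inv_mul hPunit hs hsum (hlim i)

theorem stmt_5_general (m L : ℕ) (A : Fin L → Matrix (Fin m) (Fin m) ℝ)
    (α : Fin L → ℝ)
    (S : Matrix (Fin m) (Fin m) ℝ) (hS : S = ∑ i, α i • A i)
    (hSdet : IsUnit S.det) (h : TWSDB A) :
    (∀ i, HasOnlyRealEigenvalues (S⁻¹ * A i)) ∧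
    (∀ i j, i ≠ j →
      IsNilpotent (S⁻¹ * A i * (S⁻¹ * A j) - S⁻¹ * A j * (S⁻¹ * A i))) := by
  subst hS
  obtain ⟨P, hP, e, hlim⟩ := h.exists_tendsto_conj_diagonal α hSdet
  refine ⟨fun i => (hasOnlyRealEigenvalues_diagonal (e i)).of_tendsto_conj hP (hlim i),
    fun i j _ => isNilpotent_of_tendsto_conj_zero (l := atTop) hP ?_⟩
  have hcomm := ((hlim i).mul (hlim j)).sub ((hlim j).mul (hlim i))
  rw [(commute_diagonal (e i) (e j)).eq, sub_self] at hcomm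
  simpa only [conj_mul_conj (hP _), ← Matrix.sub_mul, ← Matrix.mul_sub] using hcomm

theorem stmt_5 (m L : ℕ) (A : Fin L → Matrix (Fin m) (Fin m) ℝ)
    (hA : ∀ i, (A i).IsSymm) (α : Fin L → ℝ)
    (S : Matrix (Fin m) (Fin m) ℝ) (hS : S = ∑ i, α i • A i)
    (hSdet : IsUnit S.det) (h : TWSDB A) :
    (∀ i, HasOnlyRealEigenvalues (S⁻¹ * A i)) ∧
    (∀ i j, i ≠ j →
      IsNilpotent (S⁻¹ * A i * (S⁻¹ * A j) - S⁻¹ * A j * (S⁻¹ * A i))) :=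
  stmt_5_general m L A α S hS hSdet h
end

section
/- Let A and B be real symmetric m×m matrices. If there exist real numbers α, β, not both zero, such that αA + βB is positive semidefinite, then the pair {A, B} is TWSD. -/
open Matrix Filter Topology

/-- A finite family of real `m × m` matrices is TWSD: there are `P k ∈ SL_m(ℝ)` such that
all off-diagonal entries of `(P k)ᵀ * A i * P k` tend to `0`. -/
def TWSD {ι : Type*} {m : ℕ} (A : ι → Matrix (Fin m) (Fin m) ℝ) : Prop :=
  ∃ P : ℕ → Matrix (Fin m) (Fin m) ℝ,
    (∀ k, (P k).det = 1) ∧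
    ∀ i, ∀ p q : Fin m, p ≠ q →
      Tendsto (fun k => ((P k)ᵀ * A i * P k) p q) atTop (𝓝 (0 : ℝ))

/-
Say `α ≠ 0` in `C = α • A + β • B`. For a fixed sequence `P k`, the matrices `X` such that all
off-diagonal entries of `(P k)ᵀ * X * P k` tend to `0` form a subspace, and `A` is a combination of
`C` and `B`, so it suffices to treat the pair `C ⪰ 0`, `B`. If `C` is positive definite, `C` and `B`
are simultaneously congruent to diagonal matrices by a single `P` with `det P = 1`. Otherwise
`det C = 0`; congruence by `P k` with `det (P k) = 1` makes `C + ε_k • 1` a scalar matrix `c_k • 1`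
and `B` diagonal, and `c_k ^ m = det (C + ε_k • 1) → 0`. Since `(P k)ᵀ * C * P k` is positive
semidefinite and below `c_k • 1`, its entries are bounded by `c_k` and so tend to `0`.
-/

lemma tendsto_zero_of_tendsto_pow_zero {ι : Type*} {l : Filter ι} {f : ι → ℝ} {N : ℕ}
    (hN : N ≠ 0) (hf : Tendsto (fun k => f k ^ N) l (𝓝 0)) : Tendsto f l (𝓝 0) := by
  rw [tendsto_zero_iff_abs_tendsto_zero]
  have hroot : ∀ k, |f k| = |f k ^ N| ^ (N⁻¹ : ℝ) := fun k => by
    rw [abs_pow, Real.pow_rpow_inv_natCast (abs_nonneg _) hN]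
  have h := hf.abs.rpow_const (p := (N⁻¹ : ℝ)) (Or.inr (by positivity))
  rw [abs_zero, Real.zero_rpow (inv_ne_zero (Nat.cast_ne_zero.2 hN))] at h
  exact h.congr fun k => (hroot k).symm

namespace Matrix

variable {n : Type*}

lemma PosSemidef.sq_apply_le_mul_apply {M : Matrix n n ℝ} (hM : M.PosSemidef) (i j : n) :
    M i j ^ 2 ≤ M i i * M j j := by
  have h := (hM.submatrix ![i, j]).det_nonneg
  have hsymm : M j i = M i j := hM.isHermitian.apply i j
  rw [det_fin_two] at h
  simp only [submatrix_apply, Matrix.cons_val_zero, Matrix.cons_val_one, hsymm] at h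
  nlinarith

variable [Fintype n] [DecidableEq n]

lemma IsSymm.exists_transpose_mul_self_eq_one_isDiag {B : Matrix n n ℝ} (hB : B.IsSymm) :
    ∃ U : Matrix n n ℝ, Uᵀ * U = 1 ∧ (Uᵀ * B * U).IsDiag := by
  have hH : B.IsHermitian := by rwa [IsHermitian, conjTranspose_eq_transpose_of_trivial]
  have hstar : ∀ U : Matrix n n ℝ, star U = Uᵀ := fun U =>
    (star_eq_conjTranspose U).trans (conjTranspose_eq_transpose_of_trivial U)
  refine ⟨hH.eigenvectorUnitary, ?_, ?_⟩
  · rw [← hstar]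
    exact Unitary.coe_star_mul_self _
  · have hdiag := hH.conjStarAlgAut_star_eigenvectorUnitary
    rw [Unitary.conjStarAlgAut_star_apply, hstar] at hdiag
    rw [hdiag]
    exact isDiag_diagonal _

open scoped MatrixOrder in
lemma PosDef.exists_transpose_mul_mul_eq_one {C : Matrix n n ℝ} (hC : C.PosDef) :
    ∃ S : Matrix n n ℝ, Sᵀ * C * S = 1 := by
  set T := CFC.sqrt C
  have hT : T * T = C := CFC.sqrt_mul_sqrt_self C hC.posSemidef.nonneg
  have hTsymm : Tᵀ = T := by
    simpa [IsHermitian, conjTranspose_eq_transpose_of_trivial] using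
      (CFC.sqrt_nonneg C).posSemidef.isHermitian
  have hTu : IsUnit T.det := (isUnit_iff_isUnit_det T).1 <|
    (CFC.isUnit_sqrt_iff C hC.posSemidef.nonneg).2 hC.isUnit
  refine ⟨T⁻¹, ?_⟩
  rw [transpose_nonsing_inv, hTsymm, ← hT, ← mul_assoc, nonsing_inv_mul T hTu, one_mul,
    mul_nonsing_inv T hTu]

lemma PosDef.exists_simultaneous_diag {C B : Matrix n n ℝ} (hC : C.PosDef) (hB : B.IsSymm) :
    ∃ R : Matrix n n ℝ, Rᵀ * C * R = 1 ∧ (Rᵀ * B * R).IsDiag := by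
  obtain ⟨S, hS⟩ := hC.exists_transpose_mul_mul_eq_one
  have hB' : (Sᵀ * B * S).IsSymm := by
    rw [IsSymm, transpose_mul, transpose_mul, transpose_transpose, hB.eq, mul_assoc]
  obtain ⟨U, hU, hD⟩ := hB'.exists_transpose_mul_self_eq_one_isDiag
  have hconj : ∀ X : Matrix n n ℝ, (S * U)ᵀ * X * (S * U) = Uᵀ * (Sᵀ * X * S) * U :=
    fun X => by simp only [transpose_mul, mul_assoc]
  exact ⟨S * U, by rw [hconj, hS, mul_one, hU], by rwa [hconj]⟩

lemma exists_det_mul_diagonal_eq_one_s7 {R : Matrix n n ℝ} (hR : R.det ≠ 0) :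
    ∃ (d : n → ℝ) (t : ℝ), (R * diagonal d).det = 1 ∧ ∀ i, d i ^ 2 = t ^ 2 := by
  cases isEmpty_or_nonempty n with
  | inl _ => exact ⟨0, 0, det_isEmpty, isEmptyElim⟩
  | inr hn =>
    obtain ⟨i₀⟩ := id hn
    -- the sign `σ = ±1` on one coordinate fixes the sign of the determinant, `t` its modulus
    set σ : ℝ := |R.det| / R.det
    set t : ℝ := |R.det|⁻¹ ^ ((Fintype.card n : ℝ)⁻¹)
    have hσ : σ ^ 2 = 1 := by
      rw [div_pow, sq_abs, div_self (pow_ne_zero 2 hR)]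
    have ht : t ^ Fintype.card n = |R.det|⁻¹ :=
      Real.rpow_inv_natCast_pow (by positivity) Fintype.card_ne_zero
    refine ⟨fun i => t * Pi.mulSingle (M := fun _ => ℝ) i₀ σ i, t, ?_, fun i => ?_⟩
    · rw [det_mul, det_diagonal, Finset.prod_mul_distrib, Finset.prod_const, Finset.card_univ,
        Fintype.prod_pi_mulSingle', ht]
      field_simp
      exact mul_div_cancel₀ _ hR
    · dsimp only
      rcases eq_or_ne i i₀ with rfl | hi
      · rw [Pi.mulSingle_eq_same, mul_pow, hσ, mul_one]
      · rw [Pi.mulSingle_eq_of_ne hi, mul_one]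

lemma PosDef.exists_det_eq_one_simultaneous_diag {C B : Matrix n n ℝ} (hC : C.PosDef)
    (hB : B.IsSymm) :
    ∃ (P : Matrix n n ℝ) (c : ℝ), P.det = 1 ∧ Pᵀ * C * P = c • 1 ∧ (Pᵀ * B * P).IsDiag := by
  obtain ⟨R, hRC, hRB⟩ := hC.exists_simultaneous_diag hB
  have hR : R.det ≠ 0 := fun h0 => by
    simpa [h0] using congrArg det hRC
  obtain ⟨d, t, hdet, hd⟩ := exists_det_mul_diagonal_eq_one_s7 hR
  have hconj : ∀ X : Matrix n n ℝ,
      (R * diagonal d)ᵀ * X * (R * diagonal d) = diagonal d * (Rᵀ * X * R) * diagonal d :=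
    fun X => by simp only [transpose_mul, diagonal_transpose, mul_assoc]
  refine ⟨R * diagonal d, t ^ 2, hdet, ?_, ?_⟩
  · rw [hconj, hRC, mul_one, diagonal_mul_diagonal, smul_one_eq_diagonal]
    simp only [← sq, hd]
  · rw [hconj]
    intro i j hij
    simp only [mul_diagonal, diagonal_mul, hRB hij, mul_zero, zero_mul]

lemma PosSemidef.abs_transpose_mul_mul_apply_le {C P : Matrix n n ℝ} (hC : C.PosSemidef)
    {ε c : ℝ} (hε : 0 ≤ ε) (hP : Pᵀ * (C + ε • 1) * P = c • 1) (i j : n) :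
    |(Pᵀ * C * P) i j| ≤ c := by
  set M := Pᵀ * C * P
  have hM : M.PosSemidef := by
    simpa [conjTranspose_eq_transpose_of_trivial] using hC.conjTranspose_mul_mul_same P
  have hdiag : ∀ i, M i i ≤ c := fun i => by
    have hii := congrFun (congrFun hP i) i
    rw [mul_add, add_mul, mul_smul_comm, smul_mul_assoc, mul_one] at hii
    have hPP : 0 ≤ (Pᵀ * P) i i := by
      simpa [conjTranspose_eq_transpose_of_trivial] using
        (posSemidef_conjTranspose_mul_self P).diag_nonneg (i := i)
    simp only [add_apply, smul_apply, one_apply_eq, smul_eq_mul, mul_one] at hii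
    linarith [mul_nonneg hε hPP]
  have hc : 0 ≤ c := hM.diag_nonneg.trans (hdiag i)
  refine abs_le_of_sq_le_sq ?_ hc
  calc M i j ^ 2 ≤ M i i * M j j := hM.sq_apply_le_mul_apply i j
    _ ≤ c ^ 2 := by
      rw [sq]; exact mul_le_mul (hdiag i) (hdiag j) hM.diag_nonneg hc

def asymptoticallyDiagonalized (P : ℕ → Matrix n n ℝ) : Submodule ℝ (Matrix n n ℝ) where
  carrier := {X | ∀ i j, i ≠ j → Tendsto (fun k => ((P k)ᵀ * X * P k) i j) atTop (𝓝 0)}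
  zero_mem' := by simp
  add_mem' {X Y} hX hY i j hij := by
    simpa only [mul_add, add_mul, add_apply, add_zero] using (hX i j hij).add (hY i j hij)
  smul_mem' c X hX i j hij := by
    simpa only [mul_smul_comm, smul_mul_assoc, smul_apply, smul_eq_mul, mul_zero] using
      (hX i j hij).const_mul c

lemma tendsto_det_add_smul_one {C : Matrix n n ℝ} {ε : ℕ → ℝ} (hε : Tendsto ε atTop (𝓝 0)) :
    Tendsto (fun k => (C + ε k • 1).det) atTop (𝓝 C.det) := by
  have hcont : Continuous fun x : ℝ => (C + x • (1 : Matrix n n ℝ)).det :=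
    (continuous_const.add (continuous_id.smul continuous_const)).matrix_det
  have h := (hcont.tendsto 0).comp hε
  rwa [zero_smul, add_zero] at h

theorem PosSemidef.exists_det_eq_one_mem_asymptoticallyDiagonalized {C B : Matrix n n ℝ}
    (hC : C.PosSemidef) (hB : B.IsSymm) :
    ∃ P : ℕ → Matrix n n ℝ, (∀ k, (P k).det = 1) ∧
      C ∈ asymptoticallyDiagonalized P ∧ B ∈ asymptoticallyDiagonalized P := by
  by_cases hdet : C.det = 0
  swap
  · obtain ⟨P, c, hP, hPC, hPB⟩ :=
      ((hC.posDef_iff_det_ne_zero).2 hdet).exists_det_eq_one_simultaneous_diag hB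
    refine ⟨fun _ => P, fun _ => hP, fun i j hij => ?_, fun i j hij => ?_⟩
    · simp [hPC, hij]
    · simp [hPB hij]
  set ε : ℕ → ℝ := fun k => 1 / (k + 1)
  have hCε : ∀ k, (C + ε k • 1).PosDef := fun k =>
    PosDef.posSemidef_add hC (PosDef.one.smul (by positivity))
  choose P c hP hPC hPB using fun k => (hCε k).exists_det_eq_one_simultaneous_diag hB
  have hcard : Fintype.card n ≠ 0 := fun h => by
    have := Fintype.card_eq_zero_iff.1 h
    simp at hdet
  have hc : Tendsto c atTop (𝓝 0) := by
    refine tendsto_zero_of_tendsto_pow_zero hcard ?_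
    have hpow : ∀ k, c k ^ Fintype.card n = (C + ε k • 1).det := fun k => by
      simpa [det_mul, hP k] using (congrArg det (hPC k)).symm
    simpa only [hpow, hdet] using
      tendsto_det_add_smul_one (C := C) tendsto_one_div_add_atTop_nhds_zero_nat
  refine ⟨P, hP, fun i j _ => ?_, fun i j hij => ?_⟩
  · exact squeeze_zero_norm
      (fun k => hC.abs_transpose_mul_mul_apply_le (by positivity) (hPC k) i j) hc
  · simp [hPB _ hij]

end Matrix

theorem stmt_7 (m : ℕ) (A B : Matrix (Fin m) (Fin m) ℝ)
    (hA : A.IsSymm) (hB : B.IsSymm)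
    (h : ∃ α β : ℝ, ¬(α = 0 ∧ β = 0) ∧ (α • A + β • B).PosSemidef) :
    TWSD ![A, B] := by
  obtain ⟨α, β, hαβ, hC⟩ := h
  by_cases hα : α = 0
  · have hβ : β ≠ 0 := fun hβ => hαβ ⟨hα, hβ⟩
    obtain ⟨P, hP, hCP, hAP⟩ := hC.exists_det_eq_one_mem_asymptoticallyDiagonalized hA
    have hBP : B ∈ asymptoticallyDiagonalized P := by
      have hβB := (Submodule.add_mem_iff_right _ (Submodule.smul_mem _ α hAP)).1 hCP
      exact (Submodule.smul_mem_iff _ hβ).1 hβB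
    exact ⟨P, hP, Fin.forall_fin_two.2 ⟨hAP, hBP⟩⟩
  · obtain ⟨P, hP, hCP, hBP⟩ := hC.exists_det_eq_one_mem_asymptoticallyDiagonalized hB
    have hAP : A ∈ asymptoticallyDiagonalized P := by
      have hαA := (Submodule.add_mem_iff_left _ (Submodule.smul_mem _ β hBP)).1 hCP
      exact (Submodule.smul_mem_iff _ hα).1 hαA
    exact ⟨P, hP, Fin.forall_fin_two.2 ⟨hAP, hBP⟩⟩
end

section
/- Let A and B be real symmetric m×m matrices with A invertible. If A⁻¹B has at least one real eigenvalue (i.e., there exists λ ∈ ℝ which is a root of the characteristic polynomial of A⁻¹B), then the pair {A, B} is TWSD. -/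
/-!
Put `C = B - λ A`: it is symmetric and singular, and a sequence of congruences works for `{A, B}`
as soon as it works for `{A, C}`. Let `v ≠ 0` with `C v = 0`.

If `vᵀ A v ≠ 0`, then in a basis made of `v` and its `A`-orthogonal complement both `A` and `C`
are block diagonal with a `1 × 1` block; scaling the first basis vector by `k ^ (m - 1)` and the
others by `1 / k` sends every remaining off-diagonal entry to `0`.

If `vᵀ A v = 0`, pick `u` with `uᵀ A v = 1` and `uᵀ A u = 0`. The `A`-isometries scaling `v` by
`t` and `u` by `1 / t` move `C` towards a limit `C'` with `C' (u + v) = 0`, and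
`(u + v)ᵀ A (u + v) = 2`, so the first case applies to `{A, C'}`. Limits of congruences are
harmless because being TWSD means that `0` lies in the closure of the set of off-diagonal parts of
the unimodular congruences of the family.
-/

open Matrix Filter Topology

namespace Matrix

variable {n K : Type*} [Fintype n] [Field K]

theorem det_one_add_vecMulVec [DecidableEq n] (u v : n → K) :
    det (1 + vecMulVec u v) = 1 + v ⬝ᵥ u := by
  rw [vecMulVec_eq Unit, det_one_add_replicateCol_mul_replicateRow]

theorem one_add_vecMulVec_mulVec [DecidableEq n] (u v x : n → K) :
    (1 + vecMulVec u v) *ᵥ x = x + (v ⬝ᵥ x) • u := by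
  rw [add_mulVec, one_mulVec, vecMulVec_mulVec, op_smul_eq_smul]

theorem dotProduct_transpose_mul_mul_mulVec (R M : Matrix n n K) (x y : n → K) :
    x ⬝ᵥ (Rᵀ * M * R) *ᵥ y = (R *ᵥ x) ⬝ᵥ M *ᵥ (R *ᵥ y) := by
  rw [← mulVec_mulVec, ← mulVec_mulVec, dotProduct_mulVec, vecMul_transpose]

theorem transpose_mul_mul_apply [DecidableEq n] (R M : Matrix n n K) (p q : n) :
    (Rᵀ * M * R) p q = (R *ᵥ Pi.single p 1) ⬝ᵥ M *ᵥ (R *ᵥ Pi.single q 1) := by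
  rw [← dotProduct_transpose_mul_mul_mulVec, mulVec_single_one, single_one_dotProduct]
  rfl

theorem IsSymm.dotProduct_mulVec_comm {M : Matrix n n K} (hM : M.IsSymm) (x y : n → K) :
    x ⬝ᵥ M *ᵥ y = y ⬝ᵥ M *ᵥ x := by
  rw [dotProduct_mulVec, ← mulVec_transpose, hM.eq, dotProduct_comm]

theorem IsSymm.transpose_mul_mul {M : Matrix n n K} (hM : M.IsSymm) (R : Matrix n n K) :
    (Rᵀ * M * R).IsSymm := by
  simp only [IsSymm, transpose_mul, transpose_transpose, hM.eq, Matrix.mul_assoc]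

theorem det_sub_smul_eq_zero_of_isRoot_charpoly [DecidableEq n] {A B : Matrix n n K}
    (hA : IsUnit A.det) {c : K} (h : (A⁻¹ * B).charpoly.IsRoot c) : (B - c • A).det = 0 := by
  have hfactor : B - c • A = -(A * (scalar n c - A⁻¹ * B)) := by
    rw [Matrix.mul_sub, mul_nonsing_inv_cancel_left _ _ hA, scalar_apply, ← smul_one_eq_diagonal,
      Matrix.mul_smul, Matrix.mul_one, neg_sub]
  rw [hfactor, det_neg, det_mul, ← eval_charpoly, h.eq_zero, mul_zero, mul_zero]

theorem exists_det_eq_one_mulVec_single [DecidableEq n] (v a : n → K) {i₀ : n} (hv : v i₀ = 1)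
    (ha : a ⬝ᵥ v ≠ 0) :
    ∃ R : Matrix n n K, R.det = 1 ∧ R *ᵥ Pi.single i₀ 1 = v ∧
      ∀ q ≠ i₀, a ⬝ᵥ R *ᵥ Pi.single q 1 = 0 := by
  set e : n → K := Pi.single i₀ 1
  set r : n → K := Function.update ((a ⬝ᵥ v)⁻¹ • a) i₀ 0
  refine ⟨(1 + vecMulVec (v - e) e) * (1 + vecMulVec e (-r)), ?_, ?_, fun q hq => ?_⟩
  · rw [det_mul, det_one_add_vecMulVec, det_one_add_vecMulVec]
    simp [e, r, hv]
  · rw [← mulVec_mulVec, one_add_vecMulVec_mulVec, one_add_vecMulVec_mulVec]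
    simp [e, r]
  · rw [← mulVec_mulVec, one_add_vecMulVec_mulVec, one_add_vecMulVec_mulVec]
    simp [e, r, hq]
    field_simp
    ring

theorem exists_hyperbolic_partner {A : Matrix n n ℝ} (hA : A.IsSymm) {v : n → ℝ}
    (hAv : A *ᵥ v ≠ 0) (hv : v ⬝ᵥ A *ᵥ v = 0) :
    ∃ u, u ⬝ᵥ A *ᵥ v = 1 ∧ u ⬝ᵥ A *ᵥ u = 0 := by
  obtain ⟨u₀, hu₀v⟩ : ∃ u₀, u₀ ⬝ᵥ A *ᵥ v = 1 := ⟨(A *ᵥ v ⬝ᵥ A *ᵥ v)⁻¹ • A *ᵥ v, by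
    rw [smul_dotProduct, smul_eq_mul, inv_mul_cancel₀ (dotProduct_self_eq_zero.not.2 hAv)]⟩
  have hvu₀ : v ⬝ᵥ A *ᵥ u₀ = 1 := by rw [hA.dotProduct_mulVec_comm, hu₀v]
  refine ⟨u₀ - (u₀ ⬝ᵥ A *ᵥ u₀ / 2) • v, ?_, ?_⟩
  · rw [sub_dotProduct, smul_dotProduct, hu₀v, hv, smul_zero, sub_zero]
  · simp only [mulVec_sub, mulVec_smul, dotProduct_sub, sub_dotProduct, dotProduct_smul,
      smul_dotProduct, smul_eq_mul, hu₀v, hvu₀, hv]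
    ring

section

variable [DecidableEq n]

/-- For a hyperbolic pair `u, v` of `A` (both isotropic, `uᵀ A v = 1`) this is the isometry of
`A` scaling `v` by `t` and `u` by `t⁻¹` and fixing their `A`-orthogonal complement. -/
def hyperbolicBoost (A : Matrix n n K) (u v : n → K) (t : K) : Matrix n n K :=
  (1 + vecMulVec ((t - 1) • v) (A *ᵥ u)) * (1 + vecMulVec ((t⁻¹ - 1) • u) (A *ᵥ v))

variable {A : Matrix n n K} {u v : n → K}

theorem det_hyperbolicBoost (hA : A.IsSymm) (huv : u ⬝ᵥ A *ᵥ v = 1) {t : K} (ht : t ≠ 0) :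
    (hyperbolicBoost A u v t).det = 1 := by
  have hvu : v ⬝ᵥ A *ᵥ u = 1 := by rw [hA.dotProduct_mulVec_comm, huv]
  rw [hyperbolicBoost, det_mul, det_one_add_vecMulVec, det_one_add_vecMulVec, dotProduct_smul,
    dotProduct_smul, dotProduct_comm, hvu, dotProduct_comm, huv]
  simp [ht]

theorem hyperbolicBoost_mulVec (huu : u ⬝ᵥ A *ᵥ u = 0) (t : K) (x : n → K) :
    hyperbolicBoost A u v t *ᵥ x =
      x + ((t⁻¹ - 1) * (A *ᵥ v ⬝ᵥ x)) • u + ((t - 1) * (A *ᵥ u ⬝ᵥ x)) • v := by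
  rw [hyperbolicBoost, ← mulVec_mulVec, one_add_vecMulVec_mulVec, one_add_vecMulVec_mulVec,
    dotProduct_add, dotProduct_smul, dotProduct_smul, dotProduct_comm (A *ᵥ u) u, huu]
  simp only [smul_smul, smul_eq_mul, mul_zero, add_zero]
  ring_nf

theorem transpose_mul_mul_hyperbolicBoost (hA : A.IsSymm) (huv : u ⬝ᵥ A *ᵥ v = 1)
    (huu : u ⬝ᵥ A *ᵥ u = 0) (hvv : v ⬝ᵥ A *ᵥ v = 0) {t : K} (ht : t ≠ 0) :
    (hyperbolicBoost A u v t)ᵀ * A * hyperbolicBoost A u v t = A := by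
  have hvu : v ⬝ᵥ A *ᵥ u = 1 := by rw [hA.dotProduct_mulVec_comm, huv]
  have hleft : ∀ w x, A *ᵥ w ⬝ᵥ x = w ⬝ᵥ A *ᵥ x := fun w x => by
    rw [dotProduct_comm, hA.dotProduct_mulVec_comm]
  have hpreserve : ∀ x y,
      hyperbolicBoost A u v t *ᵥ x ⬝ᵥ A *ᵥ (hyperbolicBoost A u v t *ᵥ y) = x ⬝ᵥ A *ᵥ y := by
    intro x y
    rw [hyperbolicBoost_mulVec huu, hyperbolicBoost_mulVec huu]
    simp only [mulVec_add, mulVec_smul, dotProduct_add, add_dotProduct, dotProduct_smul,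
      smul_dotProduct, smul_eq_mul, hleft, huu, hvv, huv, hvu]
    rw [hA.dotProduct_mulVec_comm x u, hA.dotProduct_mulVec_comm x v]
    field_simp
    ring
  ext p q
  rw [transpose_mul_mul_apply, hpreserve]
  simp

theorem transpose_mul_mul_hyperbolicBoost_of_mulVec_eq_zero {C : Matrix n n K} (hC : C.IsSymm)
    (hCv : C *ᵥ v = 0) (t : K) :
    (hyperbolicBoost A u v t)ᵀ * C * hyperbolicBoost A u v t =
      (1 + vecMulVec ((t⁻¹ - 1) • u) (A *ᵥ v))ᵀ * C *
        (1 + vecMulVec ((t⁻¹ - 1) • u) (A *ᵥ v)) := by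
  have hCD : C * (1 + vecMulVec ((t - 1) • v) (A *ᵥ u)) = C := by
    rw [Matrix.mul_add, Matrix.mul_one, mul_vecMulVec, mulVec_smul, hCv, smul_zero,
      zero_vecMulVec, add_zero]
  have hDC : (1 + vecMulVec ((t - 1) • v) (A *ᵥ u))ᵀ * C = C := by
    rw [← hC.eq, ← transpose_mul, hCD]
  rw [hyperbolicBoost, transpose_mul, Matrix.mul_assoc _ _ C, hDC, Matrix.mul_assoc,
    Matrix.mul_assoc, ← Matrix.mul_assoc C, hCD]

end

end Matrix

namespace TWSD

variable {ι : Type*} {m : ℕ}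

def offDiagConj (A : ι → Matrix (Fin m) (Fin m) ℝ) (P : Matrix (Fin m) (Fin m) ℝ) :
    ι → {pq : Fin m × Fin m // pq.1 ≠ pq.2} → ℝ :=
  fun i pq => (Pᵀ * A i * P) pq.val.1 pq.val.2

theorem iff_zero_mem_closure [Countable ι] (A : ι → Matrix (Fin m) (Fin m) ℝ) :
    TWSD A ↔ 0 ∈ closure (offDiagConj A '' {P | P.det = 1}) := by
  constructor
  · rintro ⟨P, hdet, hP⟩
    exact mem_closure_of_tendsto (b := atTop)
      (tendsto_pi_nhds.2 fun i => tendsto_pi_nhds.2 fun pq => hP i _ _ pq.2)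
      (Eventually.of_forall fun k => ⟨P k, hdet k, rfl⟩)
  · intro h
    obtain ⟨x, hxS, hx⟩ := mem_closure_iff_seq_limit.1 h
    choose P hdet hPx using hxS
    refine ⟨P, hdet, fun i p q hpq => ?_⟩
    simpa [← hPx, offDiagConj] using tendsto_pi_nhds.1 (tendsto_pi_nhds.1 hx i) ⟨(p, q), hpq⟩

theorem of_tendsto_conj [Countable ι] {α : Type*} {l : Filter α} [l.NeBot]
    {A A' : ι → Matrix (Fin m) (Fin m) ℝ} (D : α → Matrix (Fin m) (Fin m) ℝ)
    (hD : ∀ᶠ t in l, (D t).det = 1)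
    (hA : ∀ i, Tendsto (fun t => (D t)ᵀ * A i * D t) l (𝓝 (A' i))) (hA' : TWSD A') :
    TWSD A := by
  rw [iff_zero_mem_closure] at hA' ⊢
  refine closure_minimal ?_ isClosed_closure hA'
  rintro _ ⟨Q, hQ, rfl⟩
  refine mem_closure_of_tendsto (f := fun t => offDiagConj A (D t * Q))
    (tendsto_pi_nhds.2 fun i => tendsto_pi_nhds.2 fun pq => ?_)
    (hD.mono fun t ht => ⟨D t * Q, by simp [det_mul, ht, hQ.out], rfl⟩)
  have hconj : Continuous fun X : Matrix (Fin m) (Fin m) ℝ => (Qᵀ * X * Q) pq.val.1 pq.val.2 :=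
    by fun_prop
  simpa [offDiagConj, Matrix.mul_assoc, Function.comp_def] using (hconj.tendsto _).comp (hA i)

theorem of_conj {A : ι → Matrix (Fin m) (Fin m) ℝ} {R : Matrix (Fin m) (Fin m) ℝ}
    (hR : R.det = 1) (h : TWSD fun i => Rᵀ * A i * R) : TWSD A := by
  obtain ⟨P, hdet, hP⟩ := h
  refine ⟨fun k => R * P k, fun k => by rw [det_mul, hR, hdet, one_mul], fun i p q hpq => ?_⟩
  simpa [Matrix.mul_assoc] using hP i p q hpq

theorem pair_add_smul {A C : Matrix (Fin m) (Fin m) ℝ} (h : TWSD ![A, C]) (c : ℝ) :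
    TWSD ![A, C + c • A] := by
  obtain ⟨P, hdet, hP⟩ := h
  refine ⟨P, hdet, fun i p q hpq => ?_⟩
  fin_cases i
  · exact hP 0 p q hpq
  · simpa [Matrix.mul_add, Matrix.add_mul] using (hP 1 p q hpq).add ((hP 0 p q hpq).const_mul c)

theorem of_row_col_eq_zero (A : ι → Matrix (Fin m) (Fin m) ℝ) (i₀ : Fin m)
    (h : ∀ i q, q ≠ i₀ → A i i₀ q = 0 ∧ A i q i₀ = 0) : TWSD A := by
  set s : ℕ → ℝ := fun k => 1 / ((k : ℝ) + 1)
  set d : ℕ → Fin m → ℝ := fun k => Function.update (fun _ => s k) i₀ (((k : ℝ) + 1) ^ (m - 1))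
  refine ⟨fun k => diagonal (d k), fun k => ?_, fun i p q hpq => ?_⟩
  · rw [det_diagonal, Finset.prod_update_of_mem (Finset.mem_univ i₀), Finset.prod_const,
      Finset.card_sdiff_of_subset (by simp), Finset.card_univ, Fintype.card_fin,
      Finset.card_singleton, ← mul_pow, mul_one_div_cancel (by positivity), one_pow]
  · have hentry : ∀ k, ((diagonal (d k))ᵀ * A i * diagonal (d k)) p q = d k p * A i p q * d k q :=
      fun k => by rw [diagonal_transpose, mul_diagonal, diagonal_mul]
    simp_rw [hentry]
    by_cases hp : p = i₀
    · subst hp; simp [(h i q (Ne.symm hpq)).1]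
    by_cases hq : q = i₀
    · subst hq; simp [(h i p hpq).2]
    simpa [d, s, hp, hq] using
      ((tendsto_one_div_add_atTop_nhds_zero_nat.mul_const (A i p q)).mul
        tendsto_one_div_add_atTop_nhds_zero_nat)

end TWSD

section

variable {m : ℕ} {A C : Matrix (Fin m) (Fin m) ℝ} {v : Fin m → ℝ}

theorem twsd_pair_of_mulVec_eq_zero_of_anisotropic (hA : A.IsSymm) (hC : C.IsSymm)
    (hCv : C *ᵥ v = 0) (hv : v ⬝ᵥ A *ᵥ v ≠ 0) : TWSD ![A, C] := by
  obtain ⟨i₀, hi₀⟩ : ∃ i, v i ≠ 0 := by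
    by_contra! h
    exact hv (by simp [funext h])
  set w := (v i₀)⁻¹ • v
  have hw : w i₀ = 1 := by simp [w, hi₀]
  have hAw : A *ᵥ w ⬝ᵥ w ≠ 0 := by
    simpa [w, mulVec_smul, dotProduct_comm _ v, hi₀] using hv
  obtain ⟨R, hdet, hRi₀, hR⟩ := exists_det_eq_one_mulVec_single w (A *ᵥ w) hw hAw
  have hsplit : ∀ M : Matrix (Fin m) (Fin m) ℝ, M.IsSymm → ∀ q,
      M *ᵥ w ⬝ᵥ R *ᵥ Pi.single q 1 = 0 → (Rᵀ * M * R) i₀ q = 0 ∧ (Rᵀ * M * R) q i₀ = 0 := by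
    intro M hM q h
    rw [transpose_mul_mul_apply, transpose_mul_mul_apply, hRi₀, hM.dotProduct_mulVec_comm,
      dotProduct_comm _ (M *ᵥ w)]
    exact ⟨h, h⟩
  refine TWSD.of_conj hdet (TWSD.of_row_col_eq_zero _ i₀ fun i q hq => ?_)
  fin_cases i
  · exact hsplit A hA q (hR q hq)
  · exact hsplit C hC q (by rw [mulVec_smul, hCv, smul_zero, zero_dotProduct])

theorem twsd_pair_of_mulVec_eq_zero_of_isotropic (hA : A.IsSymm) (hC : C.IsSymm)
    (hAv : A *ᵥ v ≠ 0) (hCv : C *ᵥ v = 0) (hv : v ⬝ᵥ A *ᵥ v = 0) : TWSD ![A, C] := by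
  obtain ⟨u, huv, huu⟩ := exists_hyperbolic_partner hA hAv hv
  have hvu : v ⬝ᵥ A *ᵥ u = 1 := by rw [hA.dotProduct_mulVec_comm, huv]
  set F : ℝ → Matrix (Fin m) (Fin m) ℝ := fun s => 1 + vecMulVec ((s - 1) • u) (A *ᵥ v)
  have hCF : ((F 0)ᵀ * C * F 0) *ᵥ (u + v) = 0 := by
    have hF : F 0 *ᵥ (u + v) = v := by
      rw [one_add_vecMulVec_mulVec, dotProduct_add, dotProduct_comm, hA.dotProduct_mulVec_comm,
        hvu, dotProduct_comm, hv]
      simp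
    rw [← mulVec_mulVec, hF, ← mulVec_mulVec, hCv, mulVec_zero]
  have huvA : (u + v) ⬝ᵥ A *ᵥ (u + v) ≠ 0 := by
    simp only [mulVec_add, dotProduct_add, add_dotProduct, huu, huv, hvu, hv]
    norm_num
  refine TWSD.of_tendsto_conj (hyperbolicBoost A u v)
    ((eventually_ne_atTop 0).mono fun t ht => det_hyperbolicBoost hA huv ht) (fun i => ?_)
    (twsd_pair_of_mulVec_eq_zero_of_anisotropic hA (hC.transpose_mul_mul _) hCF huvA)
  fin_cases i
  · exact tendsto_const_nhds.congr' ((eventually_ne_atTop 0).mono fun t ht =>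
      (transpose_mul_mul_hyperbolicBoost hA huv huu hv ht).symm)
  · show Tendsto (fun t => (hyperbolicBoost A u v t)ᵀ * C * hyperbolicBoost A u v t) atTop
      (𝓝 ((F 0)ᵀ * C * F 0))
    simp only [transpose_mul_mul_hyperbolicBoost_of_mulVec_eq_zero hC hCv]
    have hconj : Continuous fun s => (F s)ᵀ * C * F s := by fun_prop
    exact (hconj.tendsto 0).comp tendsto_inv_atTop_zero

theorem twsd_pair_of_mulVec_eq_zero (hA : A.IsSymm) (hAdet : IsUnit A.det) (hC : C.IsSymm)
    (hv : v ≠ 0) (hCv : C *ᵥ v = 0) : TWSD ![A, C] := by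
  by_cases hvA : v ⬝ᵥ A *ᵥ v = 0
  · refine twsd_pair_of_mulVec_eq_zero_of_isotropic hA hC (fun hAv => ?_) hCv hvA
    exact hAdet.ne_zero (exists_mulVec_eq_zero_iff.1 ⟨v, hv, hAv⟩)
  · exact twsd_pair_of_mulVec_eq_zero_of_anisotropic hA hC hCv hvA

end

theorem stmt_9 (m : ℕ) (A B : Matrix (Fin m) (Fin m) ℝ)
    (hA : A.IsSymm) (hB : B.IsSymm) (hAdet : IsUnit A.det)
    (h : ∃ lam : ℝ, (A⁻¹ * B).charpoly.IsRoot lam) :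
    TWSD ![A, B] := by
  obtain ⟨lam, hlam⟩ := h
  obtain ⟨v, hv, hCv⟩ :=
    exists_mulVec_eq_zero_iff.2 (det_sub_smul_eq_zero_of_isRoot_charpoly hAdet hlam)
  have hAC := twsd_pair_of_mulVec_eq_zero hA hAdet (hB.sub (hA.smul lam)) hv hCv
  simpa using hAC.pair_add_smul lam
end

section
/- Let A_1, …, A_L be real symmetric m×m matrices with A_1 invertible. Suppose there is a sequence (P_k) of matrices in ℝ^{m×m} with det P_k = 1 for all k such that every off-diagonal entry of P_kᵀ A_i P_k tends to 0 as k → ∞ for each 1 ≤ i ≤ L, and such that P_kᵀ A_1 P_k is diagonal for every k and uniformly bounded in k (in Frobenius norm). Then the family {A_1,…,A_L} is TWSD-B. -/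
/-!
Let `Bᵢ = Pₖᵀ Aᵢ Pₖ`. Since `det Pₖ = 1`, the bounded diagonal matrix `B₁ = diag dₖ` has
`∏ dₖ = det A₁ ≠ 0`, so its entries stay away from `0`. Hence `Gᵢ = B₁⁻¹ Bᵢ = Pₖ⁻¹ (A₁⁻¹ Aᵢ) Pₖ`
has off-diagonal entries tending to `0`, while `tr (Gᵢ²) = tr ((A₁⁻¹ Aᵢ)²)` does not depend on `k`.
As `tr (Gᵢ²)` is the sum of the squared diagonal entries up to products of off-diagonal ones, the
diagonal of `Gᵢ`, and with it all of `Bᵢ`, is bounded. Along a convergent subsequence the limits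
are diagonal because the off-diagonal entries tend to `0`.
-/

open Matrix Filter Topology

theorem abs_prod_le_abs_mul_pow {ι : Type*} [Fintype ι] [DecidableEq ι] (d : ι → ℝ) {M : ℝ}
    (hM : ∀ q, |d q| ≤ M) (p : ι) : |∏ q, d q| ≤ |d p| * M ^ (Fintype.card ι - 1) := by
  rw [Finset.abs_prod, ← Finset.mul_prod_erase _ _ (Finset.mem_univ p)]
  gcongr
  calc ∏ q ∈ Finset.univ.erase p, |d q| ≤ ∏ _q ∈ Finset.univ.erase p, M :=
        Finset.prod_le_prod (fun _ _ => abs_nonneg _) fun q _ => hM q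
    _ = M ^ (Fintype.card ι - 1) := by
        rw [Finset.prod_const, Finset.card_erase_of_mem (Finset.mem_univ p), Finset.card_univ]

theorem tendsto_zero_of_tendsto_mul_of_le_abs_mul {α : Type*} {l : Filter α} {a b : α → ℝ}
    {c K : ℝ} (hc : 0 < c) (ha : ∀ x, c ≤ |a x| * K)
    (h : Tendsto (fun x => a x * b x) l (𝓝 0)) : Tendsto b l (𝓝 0) := by
  rw [tendsto_zero_iff_abs_tendsto_zero]
  refine squeeze_zero (fun _ => abs_nonneg _) (g := fun x => |a x * b x| * K / c)
    (fun x => ?_) (by simpa using (h.abs.mul_const K).div_const c)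
  rw [Function.comp_apply, le_div_iff₀ hc, abs_mul]
  linarith [mul_le_mul_of_nonneg_left (ha x) (abs_nonneg (b x))]

namespace Matrix

variable {n : Type*} [Fintype n] [DecidableEq n]

theorem transpose_mul_mul_eq_diagonal_mul_conj {R : Type*} [CommRing R] {P A₁ : Matrix n n R}
    (A : Matrix n n R) {d : n → R} (hP : IsUnit P.det) (hA₁ : IsUnit A₁.det)
    (hd : Pᵀ * A₁ * P = diagonal d) :
    Pᵀ * A * P = diagonal d * (P⁻¹ * (A₁⁻¹ * A) * P) := by
  rw [← hd]
  simp only [Matrix.mul_assoc]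
  rw [← Matrix.mul_assoc P, mul_nonsing_inv _ hP, Matrix.one_mul, ← Matrix.mul_assoc A₁,
    mul_nonsing_inv _ hA₁, Matrix.one_mul]

theorem trace_conj_mul_self {R : Type*} [CommRing R] {P : Matrix n n R} (hP : IsUnit P.det)
    (X : Matrix n n R) :
    trace ((P⁻¹ * X * P) * (P⁻¹ * X * P)) = trace (X * X) := by
  rw [show (P⁻¹ * X * P) * (P⁻¹ * X * P) = P⁻¹ * (X * X) * P by
      simp only [Matrix.mul_assoc, mul_nonsing_inv_cancel_left _ _ hP],
    trace_conj' ((isUnit_iff_isUnit_det P).2 hP)]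

theorem exists_abs_diag_le_of_trace_mul_self_eq {G : ℕ → Matrix n n ℝ} {c : ℝ}
    (htr : ∀ k, trace (G k * G k) = c)
    (hoff : ∀ p q, p ≠ q → Tendsto (fun k => G k p q) atTop (𝓝 0)) (p : n) :
    ∃ C, ∀ k, |G k p p| ≤ C := by
  have hsplit : ∀ k, ∑ r, G k r r ^ 2 =
      c - ∑ r, ∑ s ∈ Finset.univ.erase r, G k r s * G k s r := by
    intro k
    rw [← htr k, trace, eq_sub_iff_add_eq, ← Finset.sum_add_distrib]
    refine Finset.sum_congr rfl fun r _ => ?_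
    rw [diag_apply, mul_apply, ← Finset.add_sum_erase _ _ (Finset.mem_univ r), sq]
  have hsum : Tendsto (fun k => ∑ r, G k r r ^ 2) atTop (𝓝 c) := by
    simp only [hsplit]
    have hoffsum : Tendsto (fun k => ∑ r, ∑ s ∈ Finset.univ.erase r, G k r s * G k s r)
        atTop (𝓝 0) := by
      rw [show (0 : ℝ) = ∑ r : n, ∑ s ∈ Finset.univ.erase r, (0 : ℝ) * 0 by simp]
      exact tendsto_finsetSum _ fun r _ => tendsto_finsetSum _ fun s hs =>
        (hoff r s (Finset.ne_of_mem_erase hs).symm).mul (hoff s r (Finset.ne_of_mem_erase hs))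
    simpa using tendsto_const_nhds.sub hoffsum
  obtain ⟨C, hC⟩ := hsum.bddAbove_range
  refine ⟨1 + C, fun k => ?_⟩
  have hp : G k p p ^ 2 ≤ C := (Finset.single_le_sum (fun r _ => sq_nonneg (G k r r))
    (Finset.mem_univ p)).trans (hC (Set.mem_range_self k))
  nlinarith [sq_nonneg (|G k p p| - 1), sq_abs (G k p p)]

end Matrix

theorem exists_subseq_tendsto_of_forall_abs_apply_le {ι n : Type*} [Finite ι] [Finite n]
    (F : ℕ → ι → Matrix n n ℝ) (hF : ∀ i p q, ∃ C, ∀ k, |F k i p q| ≤ C) :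
    ∃ X : ι → Matrix n n ℝ, ∃ φ : ℕ → ℕ, StrictMono φ ∧ Tendsto (F ∘ φ) atTop (𝓝 X) := by
  choose C hC using hF
  have hcpt : IsCompact (Set.univ.pi fun i => Set.univ.pi fun p => Set.univ.pi fun q =>
      Set.Icc (-C i p q) (C i p q) : Set (ι → n → n → ℝ)) :=
    isCompact_univ_pi fun _ => isCompact_univ_pi fun _ => isCompact_univ_pi fun _ => isCompact_Icc
  obtain ⟨X, -, φ, hφ, hlim⟩ := hcpt.tendsto_subseq (x := fun k i p q => F k i p q) fun k => by
    simp only [Set.mem_univ_pi, Set.mem_Icc, ← abs_le]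
    exact fun i p q => hC i p q k
  exact ⟨X, φ, hφ, hlim⟩

theorem twsdb_of_bounded_of_tendsto_offDiag {ι : Type*} [Finite ι] {m : ℕ}
    {A : ι → Matrix (Fin m) (Fin m) ℝ} {P : ℕ → Matrix (Fin m) (Fin m) ℝ}
    (hdet : ∀ k, (P k).det = 1)
    (hbdd : ∀ i p q, ∃ C, ∀ k, |((P k)ᵀ * A i * P k) p q| ≤ C)
    (hoff : ∀ i, ∀ p q : Fin m, p ≠ q →
      Tendsto (fun k => ((P k)ᵀ * A i * P k) p q) atTop (𝓝 0)) :
    TWSDB A := by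
  obtain ⟨D, φ, hφ, hlim⟩ := exists_subseq_tendsto_of_forall_abs_apply_le _ hbdd
  refine ⟨P ∘ φ, fun k => hdet _, D, fun i p q hpq => ?_, fun i => tendsto_pi_nhds.1 hlim i⟩
  exact tendsto_nhds_unique (tendsto_pi_nhds.1 (tendsto_pi_nhds.1 (tendsto_pi_nhds.1 hlim i) p) q)
    ((hoff i p q hpq).comp hφ.tendsto_atTop)

theorem stmt_10_general (m L : ℕ) (hL : 0 < L)
    (A : Fin L → Matrix (Fin m) (Fin m) ℝ)
    (hA1 : IsUnit (A ⟨0, hL⟩).det)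
    (P : ℕ → Matrix (Fin m) (Fin m) ℝ) (hdet : ∀ k, (P k).det = 1)
    (hoff : ∀ i, ∀ p q : Fin m, p ≠ q →
      Tendsto (fun k => ((P k)ᵀ * A i * P k) p q) atTop (𝓝 (0 : ℝ)))
    (hdiag : ∀ k, ((P k)ᵀ * A ⟨0, hL⟩ * P k).IsDiag)
    (hbdd : ∃ M : ℝ, ∀ k, ∀ p q : Fin m, |((P k)ᵀ * A ⟨0, hL⟩ * P k) p q| ≤ M) :
    TWSDB A := by
  obtain ⟨M, hM⟩ := hbdd
  set A₁ := A ⟨0, hL⟩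
  set d : ℕ → Fin m → ℝ := fun k => diag ((P k)ᵀ * A₁ * P k)
  set G : Fin L → ℕ → Matrix (Fin m) (Fin m) ℝ := fun i k => (P k)⁻¹ * (A₁⁻¹ * A i) * P k
  have hD : ∀ k, (P k)ᵀ * A₁ * P k = diagonal (d k) := fun k => (hdiag k).diagonal_diag.symm
  have hP : ∀ k, IsUnit (P k).det := fun k => by simp [hdet k]
  have hBG : ∀ i k, (P k)ᵀ * A i * P k = diagonal (d k) * G i k := fun i k =>
    transpose_mul_mul_eq_diagonal_mul_conj (A i) (hP k) hA1 (hD k)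
  have hd_lower : ∀ k p, |A₁.det| ≤ |d k p| * M ^ (m - 1) := fun k p => by
    have hprod : ∏ q, d k q = A₁.det := by
      rw [← det_diagonal, ← hD, det_mul, det_mul, det_transpose, hdet k, one_mul, mul_one]
    simpa [hprod] using abs_prod_le_abs_mul_pow (d k) (fun q => hM k q q) p
  have hGoff : ∀ i p q, p ≠ q → Tendsto (fun k => G i k p q) atTop (𝓝 0) := fun i p q hpq =>
    tendsto_zero_of_tendsto_mul_of_le_abs_mul (abs_pos.2 hA1.ne_zero) (fun k => hd_lower k p)
      (by simpa only [hBG, diagonal_mul] using hoff i p q hpq)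
  refine twsdb_of_bounded_of_tendsto_offDiag hdet (fun i p q => ?_) hoff
  rcases eq_or_ne p q with rfl | hpq
  · obtain ⟨C, hC⟩ := exists_abs_diag_le_of_trace_mul_self_eq
      (fun k => trace_conj_mul_self (hP k) (A₁⁻¹ * A i)) (hGoff i) p
    refine ⟨M * C, fun k => ?_⟩
    rw [hBG, diagonal_mul, abs_mul]
    exact mul_le_mul (hM k p p) (hC k) (abs_nonneg _) ((abs_nonneg _).trans (hM k p p))
  · obtain ⟨C, hC⟩ := (hoff i p q hpq).abs.bddAbove_range
    exact ⟨C, fun k => hC (Set.mem_range_self k)⟩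

theorem stmt_10 (m L : ℕ) (hL : 0 < L)
    (A : Fin L → Matrix (Fin m) (Fin m) ℝ) (hA : ∀ i, (A i).IsSymm)
    (hA1 : IsUnit (A ⟨0, hL⟩).det)
    (P : ℕ → Matrix (Fin m) (Fin m) ℝ) (hdet : ∀ k, (P k).det = 1)
    (hoff : ∀ i, ∀ p q : Fin m, p ≠ q →
      Tendsto (fun k => ((P k)ᵀ * A i * P k) p q) atTop (𝓝 (0 : ℝ)))
    (hdiag : ∀ k, ((P k)ᵀ * A ⟨0, hL⟩ * P k).IsDiag)
    (hbdd : ∃ M : ℝ, ∀ k, ∀ p q : Fin m, |((P k)ᵀ * A ⟨0, hL⟩ * P k) p q| ≤ M) :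
    TWSDB A :=
  stmt_10_general m L hL A hA1 P hdet hoff hdiag hbdd
end

section
/- Let A and B be real symmetric 2×2 matrices. Then the pair {A, B} is TWSD-B if and only if it is TWSD. -/
open Matrix Filter Topology

/-! Along a TWSD sequence `Mᵢ(k) = P_kᵀ Aᵢ P_k` the determinants of `Mᵢ(k)` and
`Mᵢ(k) + Mⱼ(k)` do not depend on `k`, so once the off-diagonal entries vanish in the limit,
every cross product `aᵢ dⱼ` of a top-left entry with a bottom-right entry stays bounded.
The rescaling `P_k ↦ P_k diag(t_k, t_k⁻¹)` multiplies the top-left entries by `t_k²` and divides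
the bottom-right ones by `t_k²`, and a suitable `t_k` makes all diagonal entries bounded.
A convergent subsequence of the rescaled family then has diagonal limits. -/

open Asymptotics

theorem TWSDB.twsd {ι : Type*} {m : ℕ} {A : ι → Matrix (Fin m) (Fin m) ℝ} (h : TWSDB A) :
    TWSD A := by
  obtain ⟨P, hdet, D, hD, hlim⟩ := h
  refine ⟨P, hdet, fun i p q hpq => ?_⟩
  simpa [hD i hpq] using tendsto_pi_nhds.1 (tendsto_pi_nhds.1 (hlim i) p) q

theorem twsdb_of_isBigO_diag {ι : Type*} [Finite ι] {m : ℕ}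
    {A : ι → Matrix (Fin m) (Fin m) ℝ} (P : ℕ → Matrix (Fin m) (Fin m) ℝ)
    (hdet : ∀ k, (P k).det = 1)
    (hoff : ∀ i p q, p ≠ q → Tendsto (fun k => ((P k)ᵀ * A i * P k) p q) atTop (𝓝 0))
    (hdiag : ∀ i p, (fun k => ((P k)ᵀ * A i * P k) p p) =O[atTop] fun _ => (1 : ℝ)) :
    TWSDB A := by
  have := Fintype.ofFinite ι
  let x : ℕ → ι → Fin m → Fin m → ℝ := fun k i p q => ((P k)ᵀ * A i * P k) p q
  have hx : x =O[atTop] fun _ => (1 : ℝ) := by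
    refine isBigO_pi.2 fun i => isBigO_pi.2 fun p => isBigO_pi.2 fun q => ?_
    rcases eq_or_ne p q with rfl | hpq
    · exact hdiag i p
    · exact (hoff i p q hpq).isBigO_one ℝ
  obtain ⟨c, hc⟩ := hx.bound
  obtain ⟨L, -, φ, hφ, hL⟩ := tendsto_subseq_of_frequently_bounded (x := x)
    (Metric.isBounded_closedBall (x := 0) (r := c))
    (hc.mono fun k hk => by simpa using hk).frequently
  have hLx : ∀ i p q, Tendsto (fun k => x (φ k) i p q) atTop (𝓝 (L i p q)) := fun i p q =>
    tendsto_pi_nhds.1 (tendsto_pi_nhds.1 (tendsto_pi_nhds.1 hL i) p) q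
  refine ⟨P ∘ φ, fun k => hdet _, fun i => Matrix.of (L i), fun i p q hpq => ?_,
    fun i => tendsto_pi_nhds.2 fun p => tendsto_pi_nhds.2 fun q => hLx i p q⟩
  exact tendsto_nhds_unique (hLx i p q) ((hoff i p q hpq).comp hφ.tendsto_atTop)

theorem abs_le_of_abs_mul_le_of_abs_add_le {x y a b : ℝ} (hmul : |x * y| ≤ a)
    (hadd : |x + y| ≤ b) : |x| ≤ a + b + 1 := by
  have hsq : |x| * |x| ≤ |x| * b + a := by
    calc |x| * |x| = |x * (x + y) - x * y| := by rw [← abs_mul]; ring_nf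
      _ ≤ |x| * |x + y| + |x * y| := by rw [← abs_mul]; exact abs_sub _ _
      _ ≤ |x| * b + a := by gcongr
  have ha : 0 ≤ a := (abs_nonneg _).trans hmul
  have hb : 0 ≤ b := (abs_nonneg _).trans hadd
  rcases le_or_gt |x| 1 with h | h
  · linarith
  · nlinarith

theorem isBigO_one_of_mul_of_add {α : Type*} {l : Filter α} {x y : α → ℝ}
    (hmul : (x * y) =O[l] fun _ => (1 : ℝ)) (hadd : (x + y) =O[l] fun _ => (1 : ℝ)) :
    x =O[l] fun _ => (1 : ℝ) := by
  obtain ⟨a, ha⟩ := hmul.bound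
  obtain ⟨b, hb⟩ := hadd.bound
  refine .of_bound (a + b + 1) ?_
  filter_upwards [ha, hb] with z hza hzb
  simpa using abs_le_of_abs_mul_le_of_abs_add_le (by simpa using hza) (by simpa using hzb)

theorem isBigO_mul_one_add_div_one_add {α : Type*} {l : Filter α} {u v : α → ℝ}
    (hu : ∀ z, 0 ≤ u z) (hv : ∀ z, 0 ≤ v z) (h : (u * v) =O[l] fun _ => (1 : ℝ)) :
    (fun z => u z * (1 + v z) / (1 + u z)) =O[l] fun _ => (1 : ℝ) := by
  have hle : ∀ z, ‖u z * (1 + v z) / (1 + u z)‖ ≤ ‖1 + u z * v z‖ := by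
    intro z
    have huz := hu z
    have hvz := hv z
    rw [Real.norm_of_nonneg (by bound), Real.norm_of_nonneg (by bound),
      div_le_iff₀ (by linarith)]
    nlinarith [mul_nonneg (mul_nonneg huz huz) hvz]
  exact (isBigO_of_le l hle).trans ((isBigO_refl (fun _ => (1 : ℝ)) l).add h)

theorem exists_rescaling_isBigO {ι α : Type*} [Fintype ι] {l : Filter α}
    {a d : ι → α → ℝ} (h : ∀ i j, (fun z => a i z * d j z) =O[l] fun _ => (1 : ℝ)) :
    ∃ t : α → ℝ, (∀ z, 0 < t z) ∧ ∀ i,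
      (fun z => t z ^ 2 * a i z) =O[l] (fun _ => (1 : ℝ)) ∧
      (fun z => d i z / t z ^ 2) =O[l] fun _ => (1 : ℝ) := by
  set u : α → ℝ := fun z => ∑ i, |a i z|
  set v : α → ℝ := fun z => ∑ i, |d i z|
  have hu : ∀ z, 0 ≤ u z := fun z => by positivity
  have hv : ∀ z, 0 ≤ v z := fun z => by positivity
  have hau : ∀ i z, |a i z| ≤ u z := fun i z =>
    Finset.single_le_sum (fun j _ => abs_nonneg (a j z)) (Finset.mem_univ i)
  have hdv : ∀ i z, |d i z| ≤ v z := fun i z =>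
    Finset.single_le_sum (fun j _ => abs_nonneg (d j z)) (Finset.mem_univ i)
  have huv : (u * v) =O[l] fun _ => (1 : ℝ) := by
    have : u * v = ∑ i, ∑ j, fun z => ‖a i z * d j z‖ := by
      ext z; simp [u, v, Finset.sum_mul_sum]
    rw [this]
    exact .sum fun i _ => .sum fun j _ => (h i j).norm_left
  have hscale : ∀ x u' v' : ℝ, |x| ≤ u' → 0 ≤ v' →
      ‖(1 + v') / (1 + u') * x‖ ≤ ‖u' * (1 + v') / (1 + u')‖ := fun x u' v' hx hv' => by
    have hu' : 0 ≤ u' := (abs_nonneg _).trans hx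
    have hq : 0 ≤ (1 + v') / (1 + u') := div_nonneg (by linarith) (by linarith)
    calc ‖(1 + v') / (1 + u') * x‖ = (1 + v') / (1 + u') * |x| := by
          rw [norm_mul, Real.norm_of_nonneg hq, Real.norm_eq_abs]
      _ ≤ (1 + v') / (1 + u') * u' := by gcongr
      _ = ‖u' * (1 + v') / (1 + u')‖ := by
          rw [Real.norm_of_nonneg (by rw [mul_div_assoc]; positivity)]; ring
  -- `t² = (1 + v) / (1 + u)` gives `t² u ≤ 1 + u v` and `v / t² ≤ 1 + u v`
  have ht : ∀ z, √((1 + v z) / (1 + u z)) ^ 2 = (1 + v z) / (1 + u z) := fun z =>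
    Real.sq_sqrt (div_nonneg (by linarith [hv z]) (by linarith [hu z]))
  refine ⟨fun z => √((1 + v z) / (1 + u z)), fun z => Real.sqrt_pos.2 ?_,
    fun i => ⟨?_, ?_⟩⟩
  · exact div_pos (by linarith [hv z]) (by linarith [hu z])
  · refine (isBigO_of_le l fun z => ?_).trans (isBigO_mul_one_add_div_one_add hu hv huv)
    rw [ht]
    exact hscale _ _ _ (hau i z) (hv z)
  · refine (isBigO_of_le l fun z => ?_).trans
      (isBigO_mul_one_add_div_one_add hv hu (mul_comm u v ▸ huv))
    rw [ht, div_eq_inv_mul, inv_div]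
    exact hscale _ _ _ (hdv i z) (hu z)

theorem transpose_mul_mul_diagonal_apply {n R : Type*} [Fintype n] [DecidableEq n] [CommRing R]
    (P A : Matrix n n R) (w : n → R) (p q : n) :
    ((P * diagonal w)ᵀ * A * (P * diagonal w)) p q = w p * (Pᵀ * A * P) p q * w q := by
  rw [transpose_mul, diagonal_transpose, Matrix.mul_assoc, Matrix.mul_assoc, diagonal_mul,
    ← Matrix.mul_assoc, ← Matrix.mul_assoc, mul_diagonal, ← mul_assoc]

section FinTwo

variable {P : ℕ → Matrix (Fin 2) (Fin 2) ℝ}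

theorem tendsto_diag_mul_diag_of_offDiag (hdet : ∀ k, (P k).det = 1)
    {X : Matrix (Fin 2) (Fin 2) ℝ}
    (hoff : ∀ p q, p ≠ q → Tendsto (fun k => ((P k)ᵀ * X * P k) p q) atTop (𝓝 0)) :
    Tendsto (fun k => ((P k)ᵀ * X * P k) 0 0 * ((P k)ᵀ * X * P k) 1 1) atTop (𝓝 X.det) := by
  have hM : ∀ k, ((P k)ᵀ * X * P k) 0 0 * ((P k)ᵀ * X * P k) 1 1
      = X.det + ((P k)ᵀ * X * P k) 0 1 * ((P k)ᵀ * X * P k) 1 0 := fun k => by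
    have : ((P k)ᵀ * X * P k).det = X.det := by simp [hdet k]
    rw [det_fin_two] at this
    linarith
  simpa [hM] using tendsto_const_nhds.add ((hoff 0 1 (by decide)).mul (hoff 1 0 (by decide)))

-- `aᵢ dⱼ + aⱼ dᵢ` is controlled by `det (Aᵢ + Aⱼ)`, and `(aᵢ dⱼ) (aⱼ dᵢ) = (aᵢ dᵢ) (aⱼ dⱼ)`.
theorem isBigO_diag_mul_diag_of_offDiag {ι : Type*} {A : ι → Matrix (Fin 2) (Fin 2) ℝ}
    (hdet : ∀ k, (P k).det = 1)
    (hoff : ∀ i p q, p ≠ q → Tendsto (fun k => ((P k)ᵀ * A i * P k) p q) atTop (𝓝 0))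
    (i j : ι) :
    (fun k => ((P k)ᵀ * A i * P k) 0 0 * ((P k)ᵀ * A j * P k) 1 1) =O[atTop]
      fun _ => (1 : ℝ) := by
  have hadd : ∀ k p q, ((P k)ᵀ * (A i + A j) * P k) p q
      = ((P k)ᵀ * A i * P k) p q + ((P k)ᵀ * A j * P k) p q := fun k p q => by
    rw [Matrix.mul_add, Matrix.add_mul, Matrix.add_apply]
  have hij := tendsto_diag_mul_diag_of_offDiag hdet (X := A i + A j) fun p q hpq => by
    simpa [hadd] using (hoff i p q hpq).add (hoff j p q hpq)
  have hi := tendsto_diag_mul_diag_of_offDiag hdet (hoff i)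
  have hj := tendsto_diag_mul_diag_of_offDiag hdet (hoff j)
  refine isBigO_one_of_mul_of_add
    (y := fun k => ((P k)ᵀ * A j * P k) 0 0 * ((P k)ᵀ * A i * P k) 1 1) ?_ ?_
  · refine ((hi.mul hj).isBigO_one ℝ).congr_left fun k => ?_
    simp only [Pi.mul_apply]; ring
  · refine ((hij.sub hi).sub hj |>.isBigO_one ℝ).congr_left fun k => ?_
    simp only [hadd, Pi.add_apply]; ring

end FinTwo

theorem TWSD.twsdb_of_fin_two {ι : Type*} [Fintype ι] {A : ι → Matrix (Fin 2) (Fin 2) ℝ}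
    (h : TWSD A) : TWSDB A := by
  obtain ⟨P, hdet, hoff⟩ := h
  obtain ⟨t, ht, hbdd⟩ := exists_rescaling_isBigO (isBigO_diag_mul_diag_of_offDiag hdet hoff)
  refine twsdb_of_isBigO_diag (fun k => P k * diagonal ![t k, (t k)⁻¹]) (fun k => ?_)
    (fun i p q hpq => (hoff i p q hpq).congr fun k => ?_)
    (fun i => Fin.forall_fin_two.2 ⟨?_, ?_⟩)
  · simp [hdet k, (ht k).ne']
  · have hw : ![t k, (t k)⁻¹] p * ![t k, (t k)⁻¹] q = 1 := by
      fin_cases p <;> fin_cases q <;> simp_all [(ht k).ne']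
    rw [transpose_mul_mul_diagonal_apply, mul_right_comm, hw, one_mul]
  · exact (hbdd i).1.congr_left fun k => by
      rw [transpose_mul_mul_diagonal_apply, cons_val_zero]; ring
  · exact (hbdd i).2.congr_left fun k => by
      rw [transpose_mul_mul_diagonal_apply, cons_val_one, cons_val_fin_one]; ring

theorem stmt_11_general (A B : Matrix (Fin 2) (Fin 2) ℝ) :
    TWSDB ![A, B] ↔ TWSD ![A, B] :=
  ⟨TWSDB.twsd, TWSD.twsdb_of_fin_two⟩

theorem stmt_11 (A B : Matrix (Fin 2) (Fin 2) ℝ)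
    (hA : A.IsSymm) (hB : B.IsSymm) :
    TWSDB ![A, B] ↔ TWSD ![A, B] :=
  stmt_11_general A B
end

section
/- Let A_1, …, A_L be real symmetric m×m matrices. Then the family {A_1,…,A_L} is D_{m, m²(m+1)/2}-SDO: there exist P ∈ ℝ^{(m²(m+1)/2)×m} with Pᵀ P = I_m and diagonal matrices D^{(1)},…,D^{(L)} of size m²(m+1)/2 such that A_i = Pᵀ D^{(i)} P for all 1 ≤ i ≤ L. -/
/-!
If the rows `q_k` of `P` form a tight frame, `∑ q_k q_kᵀ = I`, then `Pᵀ diag(d) P = ∑ d_k q_k q_kᵀ`,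
so every matrix in the span of the rank-one matrices `q_k q_kᵀ` is of the form `Pᵀ D P` with the
same `P`. The `m²` vectors `e_i + σ(i,j) e_j`, with `σ` the antisymmetric sign of `j - i`, form such a
frame up to the factor `2m - 1`, and their rank-one matrices span the symmetric matrices by
polarization. Since `m² ≤ m²(m+1)/2`, padding `P` with zero rows finishes the proof.
-/

open Matrix

theorem Matrix.transpose_of_mul_diagonal_mul_of {κ m α : Type*} [Fintype κ] [DecidableEq κ]
    [CommSemiring α] (q : κ → m → α) (d : κ → α) :
    (of q)ᵀ * diagonal d * of q = ∑ k, d k • vecMulVec (q k) (q k) := by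
  ext a b
  rw [Matrix.mul_assoc, mul_apply]
  simp only [diagonal_mul, transpose_apply, of_apply, sum_apply, smul_apply, vecMulVec_apply,
    smul_eq_mul]
  exact Finset.sum_congr rfl fun k _ => by ring

theorem Matrix.IsSymm.mem_of_single_add_single_mem {n K : Type*} [Fintype n] [DecidableEq n]
    [Field K] [NeZero (2 : K)] {V : Submodule K (Matrix n n K)}
    (hV : ∀ a b, single a b 1 + single b a 1 ∈ V) {B : Matrix n n K} (hB : B.IsSymm) : B ∈ V := by
  have hB' : B = (2 : K)⁻¹ • ∑ a, ∑ b, B a b • (single a b 1 + single b a 1) := by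
    ext x y
    simp [sum_apply, single_apply, ite_and, Finset.sum_add_distrib, Finset.sum_ite_irrel,
      hB.apply x y, ← two_mul, inv_mul_cancel_left₀ (two_ne_zero' K)]
  rw [hB']
  exact V.smul_mem _ (V.sum_mem fun a _ => V.sum_mem fun b _ => V.smul_mem _ (hV a b))

section SDO

variable {ι m κ : Type*} [DecidableEq m]

/-- The paper's `D_{m,n}`-SDO, with the `n` rows of `P` indexed by `κ`. -/
def IsSDO (κ : Type*) [Fintype κ] (A : ι → Matrix m m ℝ) : Prop :=
  ∃ P : Matrix κ m ℝ, Pᵀ * P = 1 ∧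
    ∃ D : ι → Matrix κ κ ℝ, (∀ i, (D i).IsDiag) ∧ ∀ i, A i = Pᵀ * D i * P

theorem IsSDO.of_embedding {κ' : Type*} [Fintype κ] [Fintype κ'] [DecidableEq κ]
    [DecidableEq κ'] {A : ι → Matrix m m ℝ} (e : κ ↪ κ') (h : IsSDO κ A) : IsSDO κ' A := by
  obtain ⟨P, hP, D, hD, hA⟩ := h
  let E : Matrix κ' κ ℝ := (1 : Matrix κ' κ' ℝ).submatrix id e
  have hconj (M : Matrix κ' κ' ℝ) : (E * P)ᵀ * M * (E * P) = Pᵀ * M.submatrix e e * P := by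
    have hsub : Eᵀ * M * E = M.submatrix e e := by
      ext a b
      simp [E, mul_apply, one_apply]
    rw [← hsub, transpose_mul]
    simp only [Matrix.mul_assoc]
  refine ⟨E * P, ?_, fun i => diagonal (Function.extend e (D i).diag 0),
    fun i => isDiag_diagonal _, fun i => ?_⟩
  · rw [← Matrix.mul_one (E * P)ᵀ, hconj, submatrix_one_embedding, Matrix.mul_one, hP]
  · rw [hconj, submatrix_diagonal_embedding, Function.extend_comp e.injective,
      (hD i).diagonal_diag, hA]

theorem isSDO_of_sum_vecMulVec_eq_smul_one [Fintype κ] [DecidableEq κ] {A : ι → Matrix m m ℝ}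
    {q : κ → m → ℝ} {r : ℝ} (hr : 0 < r) (hq : ∑ k, vecMulVec (q k) (q k) = r • 1)
    (hA : ∀ i, A i ∈ Submodule.span ℝ (Set.range fun k => vecMulVec (q k) (q k))) :
    IsSDO κ A := by
  choose d hd using fun i => (Submodule.mem_span_range_iff_exists_fun ℝ).mp (hA i)
  have hconj (c : κ → ℝ) : ((√r)⁻¹ • of q)ᵀ * diagonal c * ((√r)⁻¹ • of q) =
      r⁻¹ • ∑ k, c k • vecMulVec (q k) (q k) := by
    simp only [transpose_smul, Matrix.smul_mul, Matrix.mul_smul, smul_smul,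
      transpose_of_mul_diagonal_mul_of, ← mul_inv, Real.mul_self_sqrt hr.le]
  refine ⟨(√r)⁻¹ • of q, ?_, fun i => diagonal (r • d i), fun i => isDiag_diagonal _,
    fun i => ?_⟩
  · simpa [hq, hr.ne'] using hconj 1
  · rw [hconj, ← hd]
    simp [Finset.smul_sum, smul_smul, hr.ne']

end SDO

section PairFrame

variable {n : Type*} [LinearOrder n]

def pairSign (i j : n) : ℝ := if i < j then 1 else if j < i then -1 else 0

lemma pairSign_self (i : n) : pairSign i i = 0 := by simp [pairSign]

lemma pairSign_swap (i j : n) : pairSign j i = -pairSign i j := by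
  unfold pairSign
  rcases lt_trichotomy i j with h | rfl | h
  · simp [h, h.not_gt]
  · simp
  · simp [h, h.not_gt]

lemma pairSign_sq (i j : n) : pairSign i j ^ 2 = if i = j then 0 else 1 := by
  unfold pairSign
  rcases lt_trichotomy i j with h | rfl | h
  · simp [h, h.ne]
  · simp
  · simp [h, h.not_gt, h.ne']

lemma sum_pairSign_sq [Fintype n] (j : n) : ∑ i, pairSign i j ^ 2 = Fintype.card n - 1 := by
  have : 1 ≤ Fintype.card n := Fintype.card_pos_iff.mpr ⟨j⟩
  simp [pairSign_sq, Finset.sum_ite, Finset.filter_ne', Finset.card_erase_of_mem, this]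

def pairFrame (p : n × n) : n → ℝ := Pi.single p.1 1 + pairSign p.1 p.2 • Pi.single p.2 1

lemma vecMulVec_pairFrame (i j : n) :
    vecMulVec (pairFrame (i, j)) (pairFrame (i, j)) =
      single i i 1 + pairSign i j • (single i j 1 + single j i 1) +
        pairSign i j ^ 2 • single j j 1 := by
  simp only [pairFrame, vecMulVec_add, add_vecMulVec, vecMulVec_smul, smul_vecMulVec,
    ← single_eq_single_vecMulVec_single]
  module

lemma sum_vecMulVec_pairFrame [Fintype n] :
    ∑ p : n × n, vecMulVec (pairFrame p) (pairFrame p) = (2 * Fintype.card n - 1 : ℝ) • 1 := by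
  have hswap : ∑ i : n, ∑ j, pairSign i j • single j i (1 : ℝ) =
      -∑ i : n, ∑ j, pairSign i j • single i j (1 : ℝ) := by
    rw [Finset.sum_comm]
    simp only [← Finset.sum_neg_distrib, ← neg_smul]
    congr! with i _ j _
    exact pairSign_swap i j
  have hoff : ∑ i : n, ∑ j, pairSign i j • (single i j (1 : ℝ) + single j i 1) = 0 := by
    simp only [smul_add, Finset.sum_add_distrib, hswap, add_neg_cancel]
  have hdiag : ∑ i : n, ∑ j, pairSign i j ^ 2 • single j j (1 : ℝ) =
      (Fintype.card n - 1 : ℝ) • 1 := by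
    rw [Finset.sum_comm]
    simp only [← Finset.sum_smul, sum_pairSign_sq, ← Finset.smul_sum, sum_single_one]
  simp only [Fintype.sum_prod_type, vecMulVec_pairFrame, Finset.sum_add_distrib, hoff, hdiag,
    Finset.sum_const, Finset.card_univ, ← Finset.smul_sum, sum_single_one]
  module

lemma single_add_single_mem_span_pairFrame (a b : n) :
    single a b (1 : ℝ) + single b a 1 ∈
      Submodule.span ℝ (Set.range fun p => vecMulVec (pairFrame p) (pairFrame p)) := by
  set V := Submodule.span ℝ (Set.range fun p : n × n => vecMulVec (pairFrame p) (pairFrame p))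
  have hmem (p : n × n) : vecMulVec (pairFrame p) (pairFrame p) ∈ V :=
    Submodule.subset_span ⟨p, rfl⟩
  rcases eq_or_ne a b with rfl | hab
  · convert V.smul_mem (2 : ℝ) (hmem (a, a)) using 1
    rw [vecMulVec_pairFrame, pairSign_self]
    module
  · have hs : pairSign a b ^ 2 = 1 := by rw [pairSign_sq, if_neg hab]
    convert V.smul_mem (pairSign a b / 2) (V.sub_mem (hmem (a, b)) (hmem (b, a))) using 1
    simp only [vecMulVec_pairFrame, pairSign_swap a b, neg_sq, hs, one_smul]
    linear_combination (norm := module) -hs • (single a b (1 : ℝ) + single b a 1)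

end PairFrame

theorem isSDO_prod_of_isSymm {ι n : Type*} [Fintype n] [LinearOrder n] {A : ι → Matrix n n ℝ}
    (hA : ∀ i, (A i).IsSymm) : IsSDO (n × n) A := by
  cases isEmpty_or_nonempty n
  · exact ⟨0, Subsingleton.elim _ _, fun _ => 0, fun _ => isDiag_zero,
      fun _ => Subsingleton.elim _ _⟩
  refine isSDO_of_sum_vecMulVec_eq_smul_one ?_ sum_vecMulVec_pairFrame fun i =>
    (hA i).mem_of_single_add_single_mem single_add_single_mem_span_pairFrame
  have : (1 : ℝ) ≤ Fintype.card n := by exact_mod_cast Fintype.card_pos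
  linarith

theorem stmt_13 (m L : ℕ) (A : Fin L → Matrix (Fin m) (Fin m) ℝ)
    (hA : ∀ i, (A i).IsSymm) :
    ∃ P : Matrix (Fin (m ^ 2 * (m + 1) / 2)) (Fin m) ℝ, Pᵀ * P = 1 ∧
      ∃ D : Fin L → Matrix (Fin (m ^ 2 * (m + 1) / 2)) (Fin (m ^ 2 * (m + 1) / 2)) ℝ,
        (∀ i, (D i).IsDiag) ∧ ∀ i, A i = Pᵀ * D i * P := by
  have hcard : Fintype.card (Fin m × Fin m) ≤ Fintype.card (Fin (m ^ 2 * (m + 1) / 2)) := by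
    rw [Fintype.card_prod, Fintype.card_fin, Fintype.card_fin, Nat.le_div_iff_mul_le two_pos]
    rcases Nat.eq_zero_or_pos m with rfl | hm
    · simp
    · rw [← sq]
      exact Nat.mul_le_mul_left _ (by omega)
  obtain ⟨e⟩ := Function.Embedding.nonempty_of_card_le hcard
  exact (isSDO_prod_of_isSymm hA).of_embedding e
end

section
/- Let A be a real m×m matrix. There exists a sequence (P_k) of matrices in ℝ^{m×m} with det P_k = 1 for all k such that P_k⁻¹ A P_k converges to a diagonal matrix as k → ∞ if and only if every complex eigenvalue of A (every root in ℂ of the characteristic polynomial of A) is real. -/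
/-!
If `Pₖ⁻¹ A Pₖ → D` with `D` diagonal, then `A` and `D` have the same characteristic
polynomial, since it is a continuous function of the matrix that is constant along the sequence;
so the eigenvalues of `A` are the real diagonal entries of `D`.

Conversely, if the characteristic polynomial of `A` splits over `ℝ`, then `A` is conjugate by a
matrix of determinant one to a lower triangular `T` (peel off one real eigenvector at a time).
Conjugating `T` by `diag(t^(m-1-2i))` multiplies the entry `(i, j)` by `t^(2(i-j))` and keeps the
determinant equal to one; letting `t → 0` kills the entries below the diagonal.
-/

open Matrix Filter Topology

open Polynomial

theorem hasOnlyRealEigenvalues_iff_splits {m : ℕ} (A : Matrix (Fin m) (Fin m) ℝ) :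
    HasOnlyRealEigenvalues A ↔ A.charpoly.Splits := by
  refine ⟨fun hA => Splits.of_splits_map (algebraMap ℝ ℂ) (IsAlgClosed.splits _)
    fun z hz => ?_, fun hA z hz => ?_⟩
  · exact ⟨z.re, Complex.ext (by simp) (by simp [hA z (mem_roots'.1 hz).2])⟩
  · obtain ⟨r, rfl⟩ := hA.mem_range_of_isRoot A.charpoly_monic.ne_zero hz
    simp

namespace Matrix

theorem charpoly_eq_of_tendsto_conj_s16 {R n ι : Type*} [CommRing R] [IsDomain R] [Infinite R]
    [TopologicalSpace R] [IsTopologicalRing R] [T2Space R] [Fintype n] [DecidableEq n]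
    {l : Filter ι} [l.NeBot] {A D : Matrix n n R} {P : ι → Matrix n n R}
    (hP : ∀ k, IsUnit (P k).det) (h : Tendsto (fun k => (P k)⁻¹ * A * P k) l (𝓝 D)) :
    D.charpoly = A.charpoly := by
  refine Polynomial.funext fun t => ?_
  have hconj : ∀ k, ((P k)⁻¹ * A * P k).charpoly = A.charpoly := fun k =>
    charpoly_units_conj' (nonsingInvUnit (P k) (hP k)) A
  have hcont : Continuous fun M : Matrix n n R => M.charpoly.eval t := by
    simp only [eval_charpoly]
    fun_prop
  refine tendsto_nhds_unique ((hcont.tendsto D).comp h) ?_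
  simp only [Function.comp_def, hconj]
  exact tendsto_const_nhds

section Conj

variable {R m n : Type*} [CommRing R] [Fintype m] [DecidableEq m] [Fintype n] [DecidableEq n]

theorem reindex_conj (e : m ≃ n) (P X : Matrix m m R) :
    (reindex e e P)⁻¹ * reindex e e X * reindex e e P = reindex e e (P⁻¹ * X * P) := by
  rw [inv_reindex]
  simp only [reindex_apply, submatrix_mul_equiv]

theorem fromBlocks_conj_fromBlocks {S : Matrix m m R} (hS : IsUnit S.det) (X : Matrix m m R)
    (Y : Matrix n m R) (Z : Matrix n n R) :
    (fromBlocks S 0 0 1)⁻¹ * fromBlocks X 0 Y Z * fromBlocks S 0 0 1 =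
      fromBlocks (S⁻¹ * X * S) 0 (Y * S) Z := by
  rw [inv_fromBlocks_zero₁₂_of_isUnit_iff _ _ _ (by simp [(isUnit_iff_isUnit_det S).2 hS])]
  simp [fromBlocks_multiply]

end Conj

theorem isLowerTriangular_reindex_fromBlocks {R : Type*} [Zero R] {n m : ℕ}
    {X : Matrix (Fin n) (Fin n) R} {Z : Matrix (Fin m) (Fin m) R}
    (hX : X.IsLowerTriangular) (hZ : Z.IsLowerTriangular) (Y : Matrix (Fin m) (Fin n) R) :
    (reindex finSumFinEquiv finSumFinEquiv (fromBlocks X 0 Y Z)).IsLowerTriangular := by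
  rw [IsLowerTriangular, blockTriangular_reindex_iff]
  rintro (i | i) (j | j) hij
  · exact hX ((Fin.strictMono_castAdd m).lt_iff_lt.1 hij)
  · rfl
  · simp [Fin.lt_def] at hij; omega
  · exact hZ ((Fin.strictMono_natAdd n).lt_iff_lt.1 hij)

section Triangularization

variable {K ι : Type*} [Field K] [Fintype ι] [DecidableEq ι]

theorem exists_mulVec_eq_smul_of_isRoot_charpoly {A : Matrix ι ι K} {x : K}
    (hx : A.charpoly.IsRoot x) : ∃ v ≠ 0, A *ᵥ v = x • v := by
  have hdet : (scalar ι x - A).det = 0 := by rwa [← eval_charpoly]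
  obtain ⟨v, hv, hAv⟩ := exists_mulVec_eq_zero_iff.2 hdet
  refine ⟨v, hv, ?_⟩
  rwa [sub_mulVec, scalar_apply, ← smul_one_eq_diagonal, smul_mulVec, one_mulVec, sub_eq_zero,
    eq_comm] at hAv

theorem exists_det_eq_one_mulVec_single_eq_smul (i : ι) {v : ι → K} (hv : v ≠ 0) :
    ∃ g : Matrix ι ι K, g.det = 1 ∧ ∃ a : K, g *ᵥ Pi.single i 1 = a • v := by
  obtain ⟨g, hg⟩ := MulAction.exists_smul_eq (SpecialLinearGroup ι K)
    (Projectivization.mk K (Pi.single i 1) (by simp)) (Projectivization.mk K v hv)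
  rw [Projectivization.smul_mk, Projectivization.mk_eq_mk_iff'] at hg
  obtain ⟨a, ha⟩ := hg
  exact ⟨g, g.prop, a, ha.symm⟩

theorem exists_det_eq_one_conj_apply_eq_zero {A : Matrix ι ι K} {x : K}
    (hx : A.charpoly.IsRoot x) (i : ι) :
    ∃ g : Matrix ι ι K, g.det = 1 ∧ ∀ j ≠ i, (g⁻¹ * A * g) j i = 0 := by
  obtain ⟨v, hv, hAv⟩ := exists_mulVec_eq_smul_of_isRoot_charpoly hx
  obtain ⟨g, hg, a, hgv⟩ := exists_det_eq_one_mulVec_single_eq_smul i hv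
  have hcol : (g⁻¹ * A * g) *ᵥ Pi.single i 1 = x • Pi.single i 1 := calc
    _ = g⁻¹ *ᵥ (A *ᵥ (g *ᵥ Pi.single i 1)) := by
      simp only [mulVec_mulVec, Matrix.mul_assoc]
    _ = x • ((g⁻¹ * g) *ᵥ Pi.single i 1) := by
      rw [← mulVec_mulVec, ← mulVec_smul, hgv, mulVec_smul, hAv, smul_comm]
    _ = x • Pi.single i 1 := by rw [nonsing_inv_mul _ (by simp [hg]), one_mulVec]
  refine ⟨g, hg, fun j hj => ?_⟩
  simpa [hj] using congrFun hcol j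

/-- Putting the eigenvector in the last column is what makes the result lower triangular. -/
theorem exists_det_eq_one_isLowerTriangular_conj_of_splits :
    ∀ {n : ℕ} (A : Matrix (Fin n) (Fin n) K), A.charpoly.Splits →
      ∃ Q : Matrix (Fin n) (Fin n) K, Q.det = 1 ∧ (Q⁻¹ * A * Q).IsLowerTriangular
  | 0, _, _ => ⟨1, det_one, fun i => i.elim0⟩
  | n + 1, A, hA => by
    obtain ⟨x, hx⟩ := hA.exists_eval_eq_zero
      (by rw [charpoly_degree_eq_dim, Fintype.card_fin]; exact_mod_cast n.succ_ne_zero)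
    obtain ⟨g, hg, hcol⟩ := exists_det_eq_one_conj_apply_eq_zero hx (Fin.last n)
    set M := (reindex finSumFinEquiv finSumFinEquiv).symm (g⁻¹ * A * g) with hMdef
    have hM : M = fromBlocks M.toBlocks₁₁ 0 M.toBlocks₂₁ M.toBlocks₂₂ := by
      conv_lhs => rw [← fromBlocks_toBlocks M]
      congr
      ext i j
      rw [Subsingleton.elim j 0]
      exact hcol _ (Fin.castSucc_lt_last i).ne
    have hsplit : M.toBlocks₁₁.charpoly.Splits := by
      refine hA.of_dvd A.charpoly_monic.ne_zero ⟨M.toBlocks₂₂.charpoly, ?_⟩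
      rw [← charpoly_fromBlocks_zero₁₂, ← hM, hMdef, reindex_symm, charpoly_reindex]
      exact (charpoly_units_conj' (nonsingInvUnit g (by simp [hg])) A).symm
    obtain ⟨R, hR, hRA⟩ := exists_det_eq_one_isLowerTriangular_conj_of_splits _ hsplit
    set E := reindex finSumFinEquiv finSumFinEquiv (fromBlocks R 0 0 (1 : Matrix (Fin 1) (Fin 1) K))
    refine ⟨g * E, by simp [E, hg, hR], ?_⟩
    have hconj : (g * E)⁻¹ * A * (g * E) = reindex finSumFinEquiv finSumFinEquiv
        ((fromBlocks R 0 0 1)⁻¹ * M * fromBlocks R 0 0 1) := by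
      rw [← reindex_conj, hMdef, Equiv.apply_symm_apply, Matrix.mul_inv_rev]
      simp only [E, Matrix.mul_assoc]
    rw [hconj, hM, fromBlocks_conj_fromBlocks (n := Fin 1) (by simp [hR])]
    exact isLowerTriangular_reindex_fromBlocks hRA
      (fun i j h => absurd h (by rw [Subsingleton.elim i j]; exact lt_irrefl _)) _

end Triangularization

section Scaling

variable {K : Type*} [Field K]

theorem diagonal_inv_mul_mul_diagonal_apply {n : Type*} [Fintype n] [DecidableEq n]
    {d : n → K} (hd : ∀ i, d i ≠ 0) (T : Matrix n n K) (i j : n) :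
    ((diagonal d)⁻¹ * T * diagonal d) i j = (d i)⁻¹ * T i j * d j := by
  rw [inv_eq_left_inv (B := diagonal d⁻¹) (by simp [diagonal_mul_diagonal, hd]), mul_diagonal,
    diagonal_mul, Pi.inv_apply]

def scalingDiag (m : ℕ) (t : K) : Fin m → K :=
  fun i => t ^ (m - 1) / t ^ (2 * (i : ℕ))

theorem scalingDiag_ne_zero {m : ℕ} {t : K} (ht : t ≠ 0) (i : Fin m) :
    scalingDiag m t i ≠ 0 :=
  div_ne_zero (pow_ne_zero _ ht) (pow_ne_zero _ ht)

theorem prod_scalingDiag {t : K} (ht : t ≠ 0) (m : ℕ) : ∏ i, scalingDiag m t i = 1 := by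
  simp only [scalingDiag]
  rw [Finset.prod_div_distrib, Finset.prod_const, Finset.prod_pow_eq_pow_sum,
    Finset.card_fin, ← pow_mul, div_eq_one_iff_eq (pow_ne_zero _ ht),
    Fin.sum_univ_eq_sum_range (2 * ·), ← Finset.mul_sum, mul_comm 2, Finset.sum_range_id_mul_two,
    mul_comm]

theorem tendsto_diagonal_scalingDiag_conj [TopologicalSpace K] [ContinuousMul K] {ι : Type*}
    {m : ℕ} {T : Matrix (Fin m) (Fin m) K} (hT : T.IsLowerTriangular) {l : Filter ι}
    {t : ι → K} (ht : ∀ k, t k ≠ 0) (ht0 : Tendsto t l (𝓝 0)) :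
    Tendsto (fun k => (diagonal (scalingDiag m (t k)))⁻¹ * T * diagonal (scalingDiag m (t k))) l
      (𝓝 (diagonal T.diag)) := by
  refine tendsto_pi_nhds.2 fun i => tendsto_pi_nhds.2 fun j => ?_
  simp only [diagonal_inv_mul_mul_diagonal_apply (scalingDiag_ne_zero (ht _))]
  rcases lt_trichotomy j i with hji | rfl | hij
  · obtain ⟨a, ha⟩ := Nat.exists_eq_add_of_lt hji
    have h : ∀ k, (scalingDiag m (t k) i)⁻¹ * T i j * scalingDiag m (t k) j =
        T i j * t k ^ (2 * (a + 1)) := fun k => by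
      simp only [scalingDiag]
      rw [ha]
      field_simp [ht k]
      ring
    simp only [h, diagonal_apply_ne _ hji.ne']
    simpa using (ht0.pow (2 * (a + 1))).const_mul (T i j)
  · have h : ∀ k, (scalingDiag m (t k) j)⁻¹ * T j j * scalingDiag m (t k) j = T j j :=
      fun k => by
        rw [mul_comm, ← mul_assoc, mul_inv_cancel₀ (scalingDiag_ne_zero (ht k) j), one_mul]
    simpa only [h, diagonal_apply_eq, diag_apply] using tendsto_const_nhds
  · simpa [hT hij, diagonal_apply_ne _ hij.ne] using tendsto_const_nhds

end Scaling

end Matrix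

theorem stmt_16 (m : ℕ) (A : Matrix (Fin m) (Fin m) ℝ) :
    (∃ P : ℕ → Matrix (Fin m) (Fin m) ℝ, (∀ k, (P k).det = 1) ∧
      ∃ D : Matrix (Fin m) (Fin m) ℝ, D.IsDiag ∧
        Tendsto (fun k => (P k)⁻¹ * A * P k) atTop (𝓝 D)) ↔
    HasOnlyRealEigenvalues A := by
  rw [hasOnlyRealEigenvalues_iff_splits]
  constructor
  · rintro ⟨P, hP, D, hD, hlim⟩
    rw [← charpoly_eq_of_tendsto_conj_s16 (fun k => by simp [hP k]) hlim, ← hD.diagonal_diag,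
      charpoly_diagonal]
    exact Splits.prod fun i _ => Splits.X_sub_C _
  · intro hA
    obtain ⟨Q, hQ, hT⟩ := exists_det_eq_one_isLowerTriangular_conj_of_splits A hA
    have ht : ∀ k : ℕ, 1 / ((k : ℝ) + 1) ≠ 0 := fun k => by positivity
    refine ⟨fun k => Q * diagonal (scalingDiag m (1 / ((k : ℝ) + 1))), fun k => ?_,
      diagonal (Q⁻¹ * A * Q).diag, isDiag_diagonal _, ?_⟩
    · rw [det_mul, hQ, det_diagonal, prod_scalingDiag (ht k), one_mul]
    · convert tendsto_diagonal_scalingDiag_conj hT ht tendsto_one_div_add_atTop_nhds_zero_nat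
        using 2 with k
      simp only [Matrix.mul_inv_rev, Matrix.mul_assoc]
end

section
/- Let m ≥ 1 and define the real m×m matrices E(m) and F(m) by E(m)_{ij} = 1 if i + j = m + 1 and E(m)_{ij} = 0 otherwise, and F(m)_{ij} = 1 if i + j = m + 2 with i ≥ 2 and j ≥ 2, and F(m)_{ij} = 0 otherwise. Then the pair {E(m), F(m)} is TWSD-B. -/
/-!
With 0-based indices, the weights `w a = a - (m - 1) / 2` sum to zero and satisfy
`w i + w j = (i + j + 1) - m`. Hence `D_t = diagonal (t ^ w)` has determinant one, the congruence
`D_tᵀ · D_t` fixes `E` (supported on `i + j + 1 = m`) and multiplies `F` (supported on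
`i + j + 1 = m + 1`) by `t`. As `t → 0` the pair deforms to `{E, 0}`, and a congruence of
determinant one diagonalising the symmetric matrix `E` (an orthogonal one with a column rescaled)
finishes the job: take `P_t = D_t S`.
-/

open Matrix Filter Topology

namespace Matrix

variable {n K : Type*} [Fintype n] [DecidableEq n]

lemma IsDiag.diagonal_mul_mul_diagonal_s19 [NonUnitalNonAssocSemiring K] {M : Matrix n n K}
    (hM : M.IsDiag) (c d : n → K) : (diagonal c * M * diagonal d).IsDiag := by
  rw [← hM.diagonal_diag, diagonal_mul_diagonal, diagonal_mul_diagonal]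
  exact isDiag_diagonal _

lemma exists_det_eq_one_isDiag_of_det_ne_zero [Field K] [Nonempty n] {A Q : Matrix n n K}
    (hQ : Q.det ≠ 0) (hdiag : (Qᵀ * A * Q).IsDiag) :
    ∃ S : Matrix n n K, S.det = 1 ∧ (Sᵀ * A * S).IsDiag := by
  let c : n → K := Function.update 1 (Classical.arbitrary n) Q.det⁻¹
  refine ⟨Q * diagonal c, ?_, ?_⟩
  · rw [det_mul, det_diagonal, Finset.prod_update_of_mem (Finset.mem_univ _)]
    simp [hQ]
  · have hconj : (Q * diagonal c)ᵀ * A * (Q * diagonal c)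
        = diagonal c * (Qᵀ * A * Q) * diagonal c := by
      simp only [transpose_mul, diagonal_transpose, Matrix.mul_assoc]
    rw [hconj]
    exact hdiag.diagonal_mul_mul_diagonal_s19 c c

lemma IsSymm.exists_det_eq_one_isDiag [Nonempty n] {A : Matrix n n ℝ} (hA : A.IsSymm) :
    ∃ S : Matrix n n ℝ, S.det = 1 ∧ (Sᵀ * A * S).IsDiag := by
  have hA' : A.IsHermitian := isHermitian_iff_isSymm.2 hA
  let U : Matrix n n ℝ := hA'.eigenvectorUnitary
  have hU : Uᵀ * A * U = diagonal (RCLike.ofReal ∘ hA'.eigenvalues) := by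
    rw [← hA'.conjStarAlgAut_star_eigenvectorUnitary, Unitary.conjStarAlgAut_star_apply,
      star_eq_conjTranspose, conjTranspose_eq_transpose_of_trivial]
  refine exists_det_eq_one_isDiag_of_det_ne_zero ?_ (hU ▸ isDiag_diagonal _)
  exact (isUnit_det_of_left_inverse (Unitary.coe_star_mul_self hA'.eigenvectorUnitary)).ne_zero

end Matrix

theorem TWSDB.of_tendsto {ι : Type*} {m : ℕ} {A B : ι → Matrix (Fin m) (Fin m) ℝ}
    {Q : ℕ → Matrix (Fin m) (Fin m) ℝ} (hQ : ∀ k, (Q k).det = 1)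
    (hlim : ∀ i, Tendsto (fun k => (Q k)ᵀ * A i * Q k) atTop (𝓝 (B i)))
    {S : Matrix (Fin m) (Fin m) ℝ} (hS : S.det = 1) (hdiag : ∀ i, (Sᵀ * B i * S).IsDiag) :
    TWSDB A := by
  refine ⟨fun k => Q k * S, fun k => by rw [det_mul, hQ, hS, one_mul],
    fun i => Sᵀ * B i * S, hdiag, fun i => ?_⟩
  have hcont : Continuous fun M : Matrix (Fin m) (Fin m) ℝ => Sᵀ * M * S := by fun_prop
  refine ((hcont.tendsto _).comp (hlim i)).congr fun k => ?_
  simp only [Function.comp_apply, transpose_mul, Matrix.mul_assoc]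

noncomputable def antidiagWeight (m : ℕ) (a : Fin m) : ℝ := a - ((m : ℝ) - 1) / 2

noncomputable def antidiagScaling (m : ℕ) (t : ℝ) (a : Fin m) : ℝ := t ^ antidiagWeight m a

section antidiagScaling

variable {m : ℕ} {t : ℝ}

lemma antidiagWeight_rev (a : Fin m) : antidiagWeight m a.rev = -antidiagWeight m a := by
  rw [antidiagWeight, antidiagWeight, Fin.val_rev, Nat.cast_sub (by omega)]
  push_cast
  ring

lemma sum_antidiagWeight (m : ℕ) : ∑ a : Fin m, antidiagWeight m a = 0 := by
  have hrev := Equiv.sum_comp Fin.revPerm (antidiagWeight m)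
  simp only [Fin.revPerm_apply, antidiagWeight_rev, Finset.sum_neg_distrib] at hrev
  linarith

lemma antidiagWeight_add (i j : Fin m) :
    antidiagWeight m i + antidiagWeight m j = (i + j + 1 : ℕ) - (m : ℝ) := by
  simp only [antidiagWeight]
  push_cast
  ring

lemma det_diagonal_antidiagScaling (ht : 0 < t) : (diagonal (antidiagScaling m t)).det = 1 := by
  simp only [det_diagonal, antidiagScaling]
  rw [← Real.rpow_sum_of_pos ht, sum_antidiagWeight, Real.rpow_zero]

lemma transpose_diagonal_antidiagScaling_mul_mul (ht : 0 < t) {A : Matrix (Fin m) (Fin m) ℝ}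
    {r : ℕ} (hA : ∀ i j, A i j ≠ 0 → (i : ℕ) + j + 1 = m + r) :
    (diagonal (antidiagScaling m t))ᵀ * A * diagonal (antidiagScaling m t) = t ^ r • A := by
  ext i j
  rw [diagonal_transpose, mul_diagonal, diagonal_mul, Matrix.smul_apply, smul_eq_mul]
  by_cases h : A i j = 0
  · simp [h]
  · rw [antidiagScaling, antidiagScaling, mul_right_comm, ← Real.rpow_add ht, antidiagWeight_add,
      hA i j h]
    push_cast
    rw [add_sub_cancel_left, Real.rpow_natCast]

end antidiagScaling

theorem stmt_19 (m : ℕ) (hm : 1 ≤ m)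
    (E F : Matrix (Fin m) (Fin m) ℝ)
    (hE : ∀ i j : Fin m,
      E i j = if (i : ℕ) + 1 + ((j : ℕ) + 1) = m + 1 then 1 else 0)
    (hF : ∀ i j : Fin m,
      F i j = if (i : ℕ) + 1 + ((j : ℕ) + 1) = m + 2 ∧ 2 ≤ (i : ℕ) + 1 ∧ 2 ≤ (j : ℕ) + 1
        then 1 else 0) :
    TWSDB ![E, F] := by
  have : Nonempty (Fin m) := ⟨⟨0, hm⟩⟩
  have hEsymm : E.IsSymm := IsSymm.ext fun i j => by simp only [hE, add_comm]
  obtain ⟨S, hSdet, hSdiag⟩ := hEsymm.exists_det_eq_one_isDiag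
  have hEsupp : ∀ i j : Fin m, E i j ≠ 0 → (i : ℕ) + j + 1 = m + 0 := fun i j h => by
    by_contra hij; exact h (by rw [hE, if_neg (by omega)])
  have hFsupp : ∀ i j : Fin m, F i j ≠ 0 → (i : ℕ) + j + 1 = m + 1 := fun i j h => by
    by_contra hij; exact h (by rw [hF, if_neg (by omega)])
  let t : ℕ → ℝ := fun k => 1 / ((k : ℝ) + 1)
  have ht : ∀ k, 0 < t k := fun k => by positivity
  refine TWSDB.of_tendsto (B := ![E, 0]) (fun k => det_diagonal_antidiagScaling (ht k)) ?_
    hSdet ?_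
  · rw [Fin.forall_fin_two]
    simp only [Fin.isValue, cons_val_zero, cons_val_one]
    constructor
    · simp_rw [transpose_diagonal_antidiagScaling_mul_mul (ht _) hEsupp, pow_zero, one_smul]
      exact tendsto_const_nhds
    · simp_rw [transpose_diagonal_antidiagScaling_mul_mul (ht _) hFsupp, pow_one]
      simpa [t] using (tendsto_one_div_add_atTop_nhds_zero_nat (𝕜 := ℝ)).smul_const F
  · rw [Fin.forall_fin_two]
    exact ⟨hSdiag, by simp⟩
end
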